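/- arXiv:2511.06910 — 7 statements merged into one kernel-verified Lean document; each statement's English description precedes it below -/
import Mathlib

section
/- Let K₀ > 0 and r₀ ∈ (0,1), and let ϱ : (0, r₀) → (0, e^{−1}) be a function such that r = (K₀/4)·√( ϱ(r)·log(1/ϱ(r)) ) for every r ∈ (0, r₀). Then, as r → 0⁺, ϱ(r)·log(1/r)/r² tends to 8/K₀², and log(ϱ(r))/log(r) tends to 2. -/
/-!
Squaring the defining relation gives `r² = c ϱ log(1/ϱ)` with `c = K₀²/16`, so `ϱ(r) ≤ r²/c → 0`.
Taking logarithms, `2 log r = log ϱ + log c + log log(1/ϱ)`, and the last two terms are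
`o(log ϱ)` as `ϱ → 0⁺`; this gives `log ϱ / log r → 2`. The first limit then follows from
`ϱ log(1/r) / r² = (1/c) · log r / log ϱ`.
-/

open Filter Real Topology Set

theorem one_lt_log_one_div {ρ : ℝ} (h₀ : 0 < ρ) (h₁ : ρ < exp (-1)) : 1 < log (1 / ρ) := by
  rw [lt_log_iff_exp_lt (by positivity), one_div, lt_inv_comm₀ (exp_pos 1) h₀, ← exp_neg]
  exact h₁

theorem le_mul_log_one_div {ρ : ℝ} (h₀ : 0 < ρ) (h₁ : ρ < exp (-1)) : ρ ≤ ρ * log (1 / ρ) :=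
  le_mul_of_one_le_right h₀.le (one_lt_log_one_div h₀ h₁).le

theorem tendsto_log_one_div_nhdsGT_zero : Tendsto (fun ρ : ℝ => log (1 / ρ)) (𝓝[>] 0) atTop := by
  refine (tendsto_neg_atBot_atTop.comp tendsto_log_nhdsGT_zero).congr fun ρ => ?_
  rw [Function.comp_apply, one_div, log_inv]

theorem tendsto_log_log_one_div_div_log :
    Tendsto (fun ρ => log (log (1 / ρ)) / log ρ) (𝓝[>] 0) (𝓝 0) := by
  have h := (isLittleO_log_id_atTop.tendsto_div_nhds_zero.comp
    tendsto_log_one_div_nhdsGT_zero).neg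
  rw [neg_zero] at h
  refine h.congr fun ρ => ?_
  simp only [Function.comp_apply, id, one_div, log_inv, div_neg, neg_neg]

theorem tendsto_log_const_mul_mul_log_one_div_div_log {c : ℝ} (hc : 0 < c) :
    Tendsto (fun ρ => log (c * (ρ * log (1 / ρ))) / log ρ) (𝓝[>] 0) (𝓝 1) := by
  have h := ((tendsto_log_nhdsGT_zero.const_div_atBot (log c)).add
    (tendsto_const_nhds (x := (1 : ℝ)))).add tendsto_log_log_one_div_div_log
  rw [zero_add, add_zero] at h
  refine h.congr' ?_
  filter_upwards [Ioo_mem_nhdsGT one_pos] with ρ ⟨hρ₀, hρ₁⟩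
  have hlogρ : log ρ ≠ 0 := (log_neg hρ₀ hρ₁).ne
  have hL : 0 < log (1 / ρ) := log_pos (by rw [one_div]; exact one_lt_inv_iff₀.mpr ⟨hρ₀, hρ₁⟩)
  rw [log_mul hc.ne' (by positivity), log_mul hρ₀.ne' hL.ne']
  field_simp
  ring

theorem tendsto_nhdsGT_zero_of_le_const_mul_sq {f : ℝ → ℝ} {c : ℝ}
    (hpos : ∀ᶠ r in 𝓝[>] 0, 0 < f r) (hle : ∀ᶠ r in 𝓝[>] 0, f r ≤ c * r ^ 2) :
    Tendsto f (𝓝[>] 0) (𝓝[>] 0) := by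
  have hbound : Tendsto (fun r : ℝ => c * r ^ 2) (𝓝[>] 0) (𝓝 0) := by
    simpa using ((continuous_pow 2).const_mul c).tendsto (0 : ℝ) |>.mono_left nhdsWithin_le_nhds
  exact tendsto_nhdsWithin_iff.mpr ⟨tendsto_of_tendsto_of_tendsto_of_le_of_le' tendsto_const_nhds
    hbound (hpos.mono fun _ => le_of_lt) hle, hpos⟩

/-- Asymptotics of the implicitly defined function `ϱ` satisfying
`r = (K₀/4)√(ϱ(r) log(1/ϱ(r)))`: as `r → 0⁺`, `ϱ(r) log(1/r)/r² → 8/K₀²` and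
`log(ϱ(r))/log(r) → 2`. -/
theorem stmt8 (K₀ r₀ : ℝ) (hK₀ : 0 < K₀) (hr₀ : r₀ ∈ Set.Ioo (0 : ℝ) 1)
    (ϱ : ℝ → ℝ)
    (hmem : ∀ r ∈ Set.Ioo (0 : ℝ) r₀, ϱ r ∈ Set.Ioo 0 (Real.exp (-1)))
    (hrel : ∀ r ∈ Set.Ioo (0 : ℝ) r₀,
      r = (K₀ / 4) * Real.sqrt (ϱ r * Real.log (1 / ϱ r))) :
    Tendsto (fun r => ϱ r * Real.log (1 / r) / r ^ 2)
      (nhdsWithin 0 (Set.Ioi 0)) (nhds (8 / K₀ ^ 2)) ∧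
    Tendsto (fun r => Real.log (ϱ r) / Real.log r)
      (nhdsWithin 0 (Set.Ioi 0)) (nhds 2) := by
  set c := K₀ ^ 2 / 16
  have hc : 0 < c := by positivity
  have hnear : ∀ᶠ r in 𝓝[>] 0, r ∈ Ioo 0 r₀ := Ioo_mem_nhdsGT hr₀.1
  have hsq : ∀ r ∈ Ioo 0 r₀, r ^ 2 = c * (ϱ r * log (1 / ϱ r)) := fun r hr => by
    have hX := (hmem r hr).1.le.trans (le_mul_log_one_div (hmem r hr).1 (hmem r hr).2)
    conv_lhs => rw [hrel r hr]
    rw [mul_pow, sq_sqrt hX]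
    ring
  have hϱ : Tendsto ϱ (𝓝[>] 0) (𝓝[>] 0) := by
    refine tendsto_nhdsGT_zero_of_le_const_mul_sq (c := c⁻¹) ?_ ?_ <;>
      filter_upwards [hnear] with r hr
    · exact (hmem r hr).1
    · rw [hsq r hr, inv_mul_cancel_left₀ hc.ne']
      exact le_mul_log_one_div (hmem r hr).1 (hmem r hr).2
  have hsecond : Tendsto (fun r => log (ϱ r) / log r) (𝓝[>] 0) (𝓝 2) := by
    have h := tendsto_const_nhds (x := (2 : ℝ)) |>.div
      ((tendsto_log_const_mul_mul_log_one_div_div_log hc).comp hϱ) one_ne_zero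
    rw [div_one] at h
    refine h.congr' ?_
    filter_upwards [hnear] with r hr
    rw [Pi.div_apply, Function.comp_apply, ← hsq r hr, log_pow, div_div_eq_mul_div, Nat.cast_ofNat,
      mul_div_mul_left _ _ two_ne_zero]
  refine ⟨?_, hsecond⟩
  have h := tendsto_const_nhds (x := c⁻¹) |>.div hsecond two_ne_zero
  rw [show c⁻¹ / 2 = 8 / K₀ ^ 2 by field_simp; ring] at h
  refine h.congr' ?_
  filter_upwards [hnear] with r hr
  rw [Pi.div_apply, hsq r hr, one_div, log_inv, one_div, log_inv]
  field_simp [(hmem r hr).1.ne']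
end

section
/- Let N ≥ 1 be an integer, k' a real number, and ε₀ ∈ (0, e^{−1}]. Then there exists a constant C > 0 such that for every a ∈ (0, ε₀]: (i) if k' ≠ −1, then ∫_{{x ∈ ℝ^N : a ≤ |x| ≤ ε₀}} |x|^{−N}·(log(1/|x|))^{k'} dx ≤ C·(log(1/a))^{max(0, k'+1)}; (ii) if k' = −1, then ∫_{{x ∈ ℝ^N : a ≤ |x| ≤ ε₀}} |x|^{−N}·(log(1/|x|))^{−1} dx ≤ C·(1 + log(log(1/a))). -/
/-!
In polar coordinates the weight `‖x‖ ^ (-N)` cancels the Jacobian `r ^ (N - 1)` up to `1 / r`, so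
the integral is `N |B₁| ∫_a^ε₀ log (1 / r) ^ k' dr / r`. The substitution `u = log (1 / r)` evaluates
this to `(L_a ^ (k' + 1) - L_ε₀ ^ (k' + 1)) / (k' + 1)`, resp. `log L_a - log L_ε₀`, where
`L_t = log (1 / t)`; as `1 ≤ L_ε₀ ≤ L_a`, both are bounded as claimed.
-/

open MeasureTheory Set Metric Real

lemma log_one_div_pos {r : ℝ} (h₀ : 0 < r) (h₁ : r < 1) : 0 < log (1 / r) := by
  rw [one_div, log_inv, neg_pos]
  exact log_neg h₀ h₁

lemma hasDerivAt_log_one_div {r : ℝ} (hr : r ≠ 0) :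
    HasDerivAt (fun r => log (1 / r)) (-r⁻¹) r := by
  have : (fun r : ℝ => log (1 / r)) = fun r => -log r := by
    funext r
    rw [one_div, log_inv]
  rw [this]
  exact (hasDerivAt_log hr).neg

lemma continuousOn_log_one_div_rpow (p : ℝ) {a b : ℝ} (ha : 0 < a) (hb : b < 1) :
    ContinuousOn (fun r => log (1 / r) ^ p) (Icc a b) := by
  have hne : ∀ r ∈ Icc a b, r ≠ 0 := fun r hr => (ha.trans_le hr.1).ne'
  refine ((continuousOn_const.div continuousOn_id hne).log fun r hr => ?_).rpow_const
    fun r hr => Or.inl ?_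
  · exact one_div_ne_zero (hne r hr)
  · exact (log_one_div_pos (ha.trans_le hr.1) (hr.2.trans_lt hb)).ne'

lemma intervalIntegrable_log_one_div_rpow_div (p : ℝ) {a b : ℝ} (ha : 0 < a) (hab : a ≤ b)
    (hb : b < 1) : IntervalIntegrable (fun r => log (1 / r) ^ p / r) volume a b := by
  refine ContinuousOn.intervalIntegrable ?_
  rw [uIcc_of_le hab]
  exact (continuousOn_log_one_div_rpow p ha hb).div continuousOn_id
    fun r hr => (ha.trans_le hr.1).ne'

lemma integral_log_one_div_rpow_div {p a b : ℝ} (hp : p ≠ -1) (ha : 0 < a) (hab : a ≤ b)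
    (hb : b < 1) :
    ∫ r in a..b, log (1 / r) ^ p / r =
      (log (1 / a) ^ (p + 1) - log (1 / b) ^ (p + 1)) / (p + 1) := by
  have hp' : p + 1 ≠ 0 := fun h => hp (by linarith)
  have hderiv : ∀ r ∈ uIcc a b,
      HasDerivAt (fun r => -(log (1 / r) ^ (p + 1)) / (p + 1)) (log (1 / r) ^ p / r) r := by
    intro r hr
    rw [uIcc_of_le hab] at hr
    have hr₀ : 0 < r := ha.trans_le hr.1
    have hlog := log_one_div_pos hr₀ (hr.2.trans_lt hb)
    refine (((hasDerivAt_log_one_div hr₀.ne').rpow_const (p := p + 1)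
      (Or.inl hlog.ne')).neg.div_const (p + 1)).congr_deriv ?_
    rw [add_sub_cancel_right]
    field_simp
  rw [intervalIntegral.integral_eq_sub_of_hasDerivAt hderiv
    (intervalIntegrable_log_one_div_rpow_div p ha hab hb)]
  ring

lemma integral_log_one_div_rpow_neg_one_div {a b : ℝ} (ha : 0 < a) (hab : a ≤ b) (hb : b < 1) :
    ∫ r in a..b, log (1 / r) ^ (-1 : ℝ) / r = log (log (1 / a)) - log (log (1 / b)) := by
  have hderiv : ∀ r ∈ uIcc a b,
      HasDerivAt (fun r => -log (log (1 / r))) (log (1 / r) ^ (-1 : ℝ) / r) r := by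
    intro r hr
    rw [uIcc_of_le hab] at hr
    have hr₀ : 0 < r := ha.trans_le hr.1
    have hlog := log_one_div_pos hr₀ (hr.2.trans_lt hb)
    refine ((hasDerivAt_log_one_div hr₀.ne').log hlog.ne').neg.congr_deriv ?_
    rw [rpow_neg_one]
    field_simp
  rw [intervalIntegral.integral_eq_sub_of_hasDerivAt hderiv
    (intervalIntegrable_log_one_div_rpow_div (-1) ha hab hb)]
  ring

lemma rpow_sub_rpow_div_le_rpow_max_div_abs {L₀ L q : ℝ} (h₀ : 1 ≤ L₀) (h : L₀ ≤ L)
    (hq : q ≠ 0) :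
    (L ^ q - L₀ ^ q) / q ≤ L ^ max 0 q / |q| := by
  have hL₀q := rpow_nonneg (zero_le_one.trans h₀) q
  have hLq := rpow_nonneg (zero_le_one.trans (h₀.trans h)) q
  rcases hq.lt_or_gt with hq | hq
  · rw [max_eq_left hq.le, rpow_zero, abs_of_neg hq, ← neg_div_neg_eq, neg_sub]
    have := rpow_le_one_of_one_le_of_nonpos h₀ hq.le
    exact div_le_div_of_nonneg_right (by linarith) (by linarith)
  · rw [max_eq_right hq.le, abs_of_pos hq]
    exact div_le_div_of_nonneg_right (by linarith) hq.le

section Polar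

variable {E : Type*} [NormedAddCommGroup E] [NormedSpace ℝ E] [FiniteDimensional ℝ E]
  [MeasurableSpace E] [BorelSpace E] [Nontrivial E] (μ : Measure E) [μ.IsAddHaarMeasure]

lemma setIntegral_annulus_fun_norm (f : ℝ → ℝ) {a b : ℝ} (ha : 0 < a) (hab : a ≤ b) :
    ∫ x in {x : E | a ≤ ‖x‖ ∧ ‖x‖ ≤ b}, f ‖x‖ ∂μ =
      Module.finrank ℝ E * μ.real (ball 0 1) *
        ∫ r in a..b, r ^ (Module.finrank ℝ E - 1) * f r := by
  have hS : {x : E | a ≤ ‖x‖ ∧ ‖x‖ ≤ b} = (‖·‖) ⁻¹' Icc a b := rfl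
  have hind : ∀ x : E, ((‖·‖) ⁻¹' Icc a b).indicator (fun x => f ‖x‖) x
      = (Icc a b).indicator f ‖x‖ := fun x => indicator_comp_right (‖·‖) (g := f) (x := x)
  rw [hS, ← integral_indicator (measurableSet_Icc.preimage continuous_norm.measurable)]
  simp_rw [hind]
  rw [integral_fun_norm_addHaar μ, nsmul_eq_mul, smul_eq_mul, mul_assoc]
  simp_rw [smul_eq_mul, ← indicator_mul_right _ (fun r : ℝ => r ^ (Module.finrank ℝ E - 1)) f]
  rw [setIntegral_indicator measurableSet_Icc,
    inter_eq_self_of_subset_right (s := Ioi 0) fun r hr => ha.trans_le hr.1,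
    integral_Icc_eq_integral_Ioc, intervalIntegral.integral_of_le hab]

lemma lintegral_annulus_ofReal_fun_norm {f : ℝ → ℝ} {a b : ℝ} (ha : 0 < a) (hab : a ≤ b)
    (hf : ContinuousOn f (Icc a b)) (hf₀ : ∀ r ∈ Icc a b, 0 ≤ f r) :
    ∫⁻ x in {x : E | a ≤ ‖x‖ ∧ ‖x‖ ≤ b}, ENNReal.ofReal (f ‖x‖) ∂μ =
      ENNReal.ofReal (Module.finrank ℝ E * μ.real (ball 0 1) *
        ∫ r in a..b, r ^ (Module.finrank ℝ E - 1) * f r) := by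
  have hmeas : MeasurableSet {x : E | a ≤ ‖x‖ ∧ ‖x‖ ≤ b} :=
    measurableSet_Icc.preimage continuous_norm.measurable
  have hcompact : IsCompact {x : E | a ≤ ‖x‖ ∧ ‖x‖ ≤ b} :=
    (isCompact_closedBall 0 b).of_isClosed_subset (isClosed_Icc.preimage continuous_norm)
      fun x hx => mem_closedBall_zero_iff.2 hx.2
  have hint : IntegrableOn (fun x : E => f ‖x‖) {x : E | a ≤ ‖x‖ ∧ ‖x‖ ≤ b} μ :=
    (hf.comp continuous_norm.continuousOn fun x hx => hx).integrableOn_compact hcompact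
  rw [← setIntegral_annulus_fun_norm μ f ha hab,
    ofReal_integral_eq_lintegral_ofReal hint
      (ae_restrict_of_forall_mem hmeas fun x hx => hf₀ _ hx)]

lemma lintegral_annulus_norm_rpow_neg_finrank_mul_log_rpow (p : ℝ) {a b : ℝ} (ha : 0 < a)
    (hab : a ≤ b) (hb : b < 1) :
    ∫⁻ x in {x : E | a ≤ ‖x‖ ∧ ‖x‖ ≤ b},
        ENNReal.ofReal (‖x‖ ^ (-(Module.finrank ℝ E : ℝ)) * log (1 / ‖x‖) ^ p) ∂μ =
      ENNReal.ofReal (Module.finrank ℝ E * μ.real (ball 0 1) *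
        ∫ r in a..b, log (1 / r) ^ p / r) := by
  set n := Module.finrank ℝ E
  have hn : 1 ≤ n := Module.finrank_pos
  have hcont : ContinuousOn (fun r : ℝ => r ^ (-(n : ℝ)) * log (1 / r) ^ p) (Icc a b) :=
    (continuousOn_id.rpow_const fun r hr => Or.inl (ha.trans_le hr.1).ne').mul
      (continuousOn_log_one_div_rpow p ha hb)
  have hnonneg : ∀ r ∈ Icc a b, 0 ≤ r ^ (-(n : ℝ)) * log (1 / r) ^ p := fun r hr =>
    have hr₀ : 0 < r := ha.trans_le hr.1
    mul_nonneg (rpow_nonneg hr₀.le _) (rpow_nonneg (log_one_div_pos hr₀ (hr.2.trans_lt hb)).le _)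
  rw [lintegral_annulus_ofReal_fun_norm μ ha hab hcont hnonneg]
  congr 2
  refine intervalIntegral.integral_congr fun r hr => ?_
  rw [uIcc_of_le hab] at hr
  have hr₀ : 0 < r := ha.trans_le hr.1
  rw [← rpow_natCast, ← mul_assoc, ← rpow_add hr₀, Nat.cast_sub hn, Nat.cast_one,
    show (n : ℝ) - 1 + -n = -1 by ring, rpow_neg_one, inv_mul_eq_div]

end Polar

lemma one_le_log_one_div {ε : ℝ} (h₀ : 0 < ε) (h : ε ≤ exp (-1)) : 1 ≤ log (1 / ε) := by
  rw [one_div, log_inv, le_neg, ← log_exp (-1)]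
  exact log_le_log h₀ h

/-- Critical case `2k = N` of the fundamental integral lemma: annulus integrals of
`|x|^(-N) (log(1/|x|))^(k')` are bounded by `C (log(1/a))^(max 0 (k'+1))` if `k' ≠ -1`,
and by `C (1 + log log(1/a))` if `k' = -1`. -/
theorem stmt9 (N : ℕ) (hN : 1 ≤ N) (k' : ℝ) (ε₀ : ℝ)
    (hε₀ : ε₀ ∈ Set.Ioc (0 : ℝ) (Real.exp (-1))) :
    ∃ C > (0 : ℝ), ∀ a ∈ Set.Ioc (0 : ℝ) ε₀,
      (k' ≠ -1 →
        ∫⁻ x in {x : EuclideanSpace ℝ (Fin N) | a ≤ ‖x‖ ∧ ‖x‖ ≤ ε₀},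
            ENNReal.ofReal (‖x‖ ^ (-(N : ℝ)) * Real.log (1 / ‖x‖) ^ k')
          ≤ ENNReal.ofReal (C * Real.log (1 / a) ^ max 0 (k' + 1))) ∧
      (k' = -1 →
        ∫⁻ x in {x : EuclideanSpace ℝ (Fin N) | a ≤ ‖x‖ ∧ ‖x‖ ≤ ε₀},
            ENNReal.ofReal (‖x‖ ^ (-(N : ℝ)) * Real.log (1 / ‖x‖) ^ k')
          ≤ ENNReal.ofReal (C * (1 + Real.log (Real.log (1 / a))))) := by
  have : Nontrivial (EuclideanSpace ℝ (Fin N)) :=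
    Module.nontrivial_of_finrank_pos (R := ℝ) (by rw [finrank_euclideanSpace_fin]; omega)
  set c := (N : ℝ) * volume.real (ball (0 : EuclideanSpace ℝ (Fin N)) 1) with hc_def
  have hc : 0 < c := mul_pos (by exact_mod_cast hN)
    (ENNReal.toReal_pos (measure_ball_pos volume 0 one_pos).ne' measure_ball_lt_top.ne)
  clear_value c
  have hε₁ : ε₀ < 1 := hε₀.2.trans_lt (exp_lt_one_iff.2 (by norm_num))
  have hLε := one_le_log_one_div hε₀.1 hε₀.2
  -- `max 1` keeps the constant positive at `k' = -1`, where `|k' + 1|⁻¹ = 0`.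
  refine ⟨c * max 1 |k' + 1|⁻¹, mul_pos hc (lt_max_of_lt_left one_pos), fun a ⟨ha, haε⟩ => ?_⟩
  have hpolar := lintegral_annulus_norm_rpow_neg_finrank_mul_log_rpow
    (volume : Measure (EuclideanSpace ℝ (Fin N))) k' ha haε hε₁
  rw [finrank_euclideanSpace_fin] at hpolar
  have hLa : log (1 / ε₀) ≤ log (1 / a) := log_le_log (one_div_pos.2 hε₀.1) (by gcongr)
  rw [hpolar, ← hc_def]
  refine ⟨fun hk => ENNReal.ofReal_le_ofReal ?_, fun hk => ENNReal.ofReal_le_ofReal ?_⟩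
  · have hk' : k' + 1 ≠ 0 := fun h => hk (by linarith)
    rw [integral_log_one_div_rpow_div hk ha haε hε₁, mul_assoc]
    gcongr
    calc _ ≤ log (1 / a) ^ max 0 (k' + 1) / |k' + 1| :=
          rpow_sub_rpow_div_le_rpow_max_div_abs hLε hLa hk'
      _ ≤ max 1 |k' + 1|⁻¹ * log (1 / a) ^ max 0 (k' + 1) := by
        rw [div_eq_inv_mul]
        exact mul_le_mul_of_nonneg_right (le_max_right _ _)
          (rpow_nonneg (by linarith) _)
  · subst hk
    rw [integral_log_one_div_rpow_neg_one_div ha haε hε₁, mul_assoc]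
    gcongr
    have hlog := log_nonneg (hLε.trans hLa)
    calc _ ≤ 1 + log (log (1 / a)) := by linarith [log_nonneg hLε]
      _ ≤ _ := le_mul_of_one_le_left (by linarith) (le_max_left _ _)
end

section
/- Let ν > 0, m > 0, c > 0 and C₀ > 0 be real numbers, and set β = (ν+1)/m and θ_* = (c·m/(ν+1))^{−1/m}. Then there exist T₀ ∈ (0, e^{−1}) and C₁ > 0, depending only on ν, m, c and C₀, such that for every T ∈ (0, T₀] the following holds. Suppose θ : [0,T) → (0, ∞) is differentiable and, writing L(t) = log(1/(T−t)), satisfies for all t ∈ [0,T): |θ'(t) + c·θ(t)^{1+m}·(T−t)^{−1}·L(t)^{ν}| ≤ C₀·θ(t)^{1+m}·(T−t)^{−1}·L(t)^{ν−1/2}, and additionally |θ(0)^{−m} − (c·m/(ν+1))·L(0)^{ν+1}| ≤ C₀·L(0)^{ν+1/2}. Then for all t ∈ [0,T): |θ(t) − θ_*·L(t)^{−β}| ≤ C₁·L(t)^{−β−1/2}. -/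
/-!
Write `L(t) = log (1 / (T - t))` and `u = θ ^ (-m)`. Multiplying the differential inequality by
`-m θ^(-m-1)` gives `|u' - A (L^(ν+1))'| ≤ K (L^(ν+1/2))'` with `A = cm/(ν+1)` and
`K = mC₀/(ν+1/2)`, since `L' = (T - t)⁻¹`. The fencing theorem integrates this to
`|u - A L^(ν+1)| ≤ C L^(ν+1/2)`, a relative error `O(L^(-1/2))`, which is at most `1/2` once `T` is
small. On relative errors below `1/2` the power `x ↦ x^(-1/m)` is Lipschitz, so the same relative
error passes to `θ = u^(-1/m)`.
-/

open Real Set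

lemma abs_one_add_rpow_sub_one_le {p e : ℝ} (hp : p ≤ 1) (he : |e| ≤ 1 / 2) :
    |(1 + e) ^ p - 1| ≤ |p| * 2 ^ (1 - p) * |e| := by
  have hderiv : ∀ x ∈ Icc (-(1 / 2) : ℝ) (1 / 2),
      HasDerivWithinAt (fun x => (1 + x) ^ p) (1 * p * (1 + x) ^ (p - 1)) (Icc (-(1 / 2)) (1 / 2)) x :=
    fun x hx => (((hasDerivAt_id x).const_add 1).rpow_const
      (Or.inl (by simp only [id]; linarith [hx.1]))).hasDerivWithinAt
  have hbound : ∀ x ∈ Icc (-(1 / 2) : ℝ) (1 / 2), ‖1 * p * (1 + x) ^ (p - 1)‖ ≤ |p| * 2 ^ (1 - p) := by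
    intro x hx
    have hx' : (2⁻¹ : ℝ) ≤ 1 + x := by linarith [hx.1]
    calc ‖1 * p * (1 + x) ^ (p - 1)‖ = |p| * (1 + x) ^ (p - 1) := by
          rw [one_mul, norm_mul, norm_eq_abs, norm_eq_abs,
            abs_of_pos (rpow_pos_of_pos (by linarith) _)]
      _ ≤ |p| * (2⁻¹) ^ (p - 1) := by
          have := rpow_le_rpow_of_nonpos (by norm_num) hx' (by linarith : p - 1 ≤ 0)
          exact mul_le_mul_of_nonneg_left this (abs_nonneg p)
      _ = |p| * 2 ^ (1 - p) := by
          rw [inv_rpow zero_le_two, ← rpow_neg zero_le_two, neg_sub]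
  have he' : e ∈ Icc (-(1 / 2) : ℝ) (1 / 2) := abs_le.1 he
  simpa using (convex_Icc _ _).norm_image_sub_le_of_norm_hasDerivWithin_le hderiv hbound
    (show (0 : ℝ) ∈ Icc (-(1 / 2)) (1 / 2) by norm_num) he'

lemma abs_rpow_sub_rpow_le_of_abs_sub_le {p x D η : ℝ} (hp : p ≤ 1) (hD : 0 < D)
    (hη : η ≤ 1 / 2) (h : |x - D| ≤ η * D) :
    |x ^ p - D ^ p| ≤ |p| * 2 ^ (1 - p) * η * D ^ p := by
  set e := (x - D) / D
  have hx : x = D * (1 + e) := by simp only [e]; field_simp; ring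
  have he : |e| ≤ η := by rwa [abs_div, abs_of_pos hD, div_le_iff₀ hD]
  have h1e : 0 ≤ 1 + e := by linarith [neg_abs_le e]
  calc |x ^ p - D ^ p| = D ^ p * |(1 + e) ^ p - 1| := by
        rw [hx, mul_rpow hD.le h1e, ← mul_sub_one, abs_mul, abs_of_pos (rpow_pos_of_pos hD p)]
    _ ≤ D ^ p * (|p| * 2 ^ (1 - p) * η) := by
        gcongr
        exact (abs_one_add_rpow_sub_one_le hp (he.trans hη)).trans (by gcongr)
    _ = |p| * 2 ^ (1 - p) * η * D ^ p := by ring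

lemma abs_rpow_sub_mul_rpow_le {A K a p x y : ℝ} (hp : p ≤ 1) (hA : 0 < A) (hy : 0 < y)
    (hK : (2 * K / A) ^ 2 ≤ y) (h : |x - A * y ^ a| ≤ K * y ^ (a - 1 / 2)) :
    |x ^ p - A ^ p * y ^ (a * p)| ≤ |p| * 2 ^ (1 - p) * (K / A) * A ^ p * y ^ (a * p - 1 / 2) := by
  have hsqrt : 0 < √y := sqrt_pos.2 hy
  have hhalf : y ^ (-(1 / 2) : ℝ) = (√y)⁻¹ := by rw [rpow_neg hy.le, sqrt_eq_rpow]
  have hη : K / A * y ^ (-(1 / 2) : ℝ) ≤ 1 / 2 := by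
    have h2K : 2 * K / A ≤ √y := le_sqrt_of_sq_le hK
    rw [div_le_iff₀ hA] at h2K
    rw [hhalf, ← div_eq_mul_inv, div_le_iff₀ hsqrt, div_mul_eq_mul_div, div_le_iff₀ hA]
    linarith
  have hrel : |x - A * y ^ a| ≤ K / A * y ^ (-(1 / 2) : ℝ) * (A * y ^ a) := by
    convert h using 1
    rw [sub_eq_add_neg, rpow_add hy]
    field_simp
  have hDp : (A * y ^ a) ^ p = A ^ p * y ^ (a * p) := by
    rw [mul_rpow hA.le (rpow_nonneg hy.le a), rpow_mul hy.le]
  have key := abs_rpow_sub_rpow_le_of_abs_sub_le hp (by positivity) hη hrel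
  rw [hDp] at key
  convert key using 1
  rw [show a * p - 1 / 2 = a * p + -(1 / 2) by ring, rpow_add hy]
  ring

lemma le_log_one_div_of_le_exp_neg {M x : ℝ} (hx : 0 < x) (h : x ≤ exp (-M)) :
    M ≤ log (1 / x) := by
  rw [one_div, log_inv, le_neg, ← log_exp (-M)]
  exact log_le_log hx h

lemma hasDerivAt_log_one_div_sub_rpow {T t p : ℝ} (ht : t < T) (hL : log (1 / (T - t)) ≠ 0) :
    HasDerivAt (fun s => log (1 / (T - s)) ^ p) ((T - t)⁻¹ * p * log (1 / (T - t)) ^ (p - 1)) t := by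
  have hlog : HasDerivAt (fun s => log (1 / (T - s))) (T - t)⁻¹ t := by
    have h := (((hasDerivAt_id t).const_sub T).log (sub_pos.2 ht).ne').fun_neg
    simp only [id, neg_div, neg_neg, one_div] at h
    simpa only [one_div, log_inv] using h
  exact hlog.rpow_const (Or.inl hL)

lemma abs_mul_rpow_neg_sub_le {m θ θ' a b : ℝ} (hm : 0 ≤ m) (hθ : 0 < θ)
    (h : |θ' + θ ^ (1 + m) * a| ≤ θ ^ (1 + m) * b) :
    |θ' * (-m) * θ ^ (-m - 1) - m * a| ≤ m * b := by
  have hinv : θ ^ (-m - 1) * θ ^ (1 + m) = 1 := by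
    rw [← rpow_add hθ, show -m - 1 + (1 + m) = 0 by ring, rpow_zero]
  have hpos : 0 ≤ m * θ ^ (-m - 1) := by positivity
  calc |θ' * (-m) * θ ^ (-m - 1) - m * a|
      = m * θ ^ (-m - 1) * |θ' + θ ^ (1 + m) * a| := by
        rw [← abs_of_nonneg hpos, ← abs_mul, ← abs_neg]
        congr 1
        linear_combination (-(m * a)) * hinv
    _ ≤ m * θ ^ (-m - 1) * (θ ^ (1 + m) * b) := by gcongr
    _ = m * b := by linear_combination (m * b) * hinv

lemma abs_rpow_neg_sub_le_of_abs_deriv_add_le {ν m c C₀ T t : ℝ} {θ θ' : ℝ → ℝ} (hm : 0 ≤ m)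
    (hν : 0 < ν + 1 / 2) (hT : T < 1) (hθ : ∀ s ∈ Ico 0 T, 0 < θ s)
    (hθ' : ∀ s ∈ Ico 0 T, HasDerivWithinAt θ (θ' s) (Ico 0 T) s)
    (hode : ∀ s ∈ Ico 0 T,
      |θ' s + c * θ s ^ (1 + m) * (T - s)⁻¹ * log (1 / (T - s)) ^ ν|
        ≤ C₀ * θ s ^ (1 + m) * (T - s)⁻¹ * log (1 / (T - s)) ^ (ν - 1 / 2))
    (ht : t ∈ Ico 0 T) :
    |θ t ^ (-m) - c * m / (ν + 1) * log (1 / (T - t)) ^ (ν + 1)|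
      ≤ |θ 0 ^ (-m) - c * m / (ν + 1) * log (1 / T) ^ (ν + 1)|
        + m * C₀ / (ν + 1 / 2) * (log (1 / (T - t)) ^ (ν + 1 / 2) - log (1 / T) ^ (ν + 1 / 2)) := by
  set A := c * m / (ν + 1)
  set K := m * C₀ / (ν + 1 / 2)
  have hA : A * (ν + 1) = c * m := div_mul_cancel₀ _ (by linarith)
  have hK : K * (ν + 1 / 2) = m * C₀ := div_mul_cancel₀ _ hν.ne'
  set L : ℝ → ℝ := fun s => log (1 / (T - s))
  have hL : ∀ s ∈ Ico 0 T, 0 < L s := fun s hs =>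
    log_pos (one_lt_one_div (sub_pos.2 hs.2) (by linarith [hs.1]))
  set F : ℝ → ℝ := fun s => θ s ^ (-m) - A * L s ^ (ν + 1)
  set F' : ℝ → ℝ := fun s =>
    θ' s * (-m) * θ s ^ (-m - 1) - A * ((T - s)⁻¹ * (ν + 1) * L s ^ (ν + 1 - 1))
  set G : ℝ → ℝ := fun s => K * L s ^ (ν + 1 / 2)
  set G' : ℝ → ℝ := fun s => K * ((T - s)⁻¹ * (ν + 1 / 2) * L s ^ (ν + 1 / 2 - 1))
  have hF : ∀ s ∈ Ico 0 T, HasDerivWithinAt F (F' s) (Ico 0 T) s := fun s hs =>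
    ((hθ' s hs).rpow_const (Or.inl (hθ s hs).ne')).sub
      ((hasDerivAt_log_one_div_sub_rpow hs.2 (hL s hs).ne').const_mul A).hasDerivWithinAt
  have hG : ∀ s ∈ Ico 0 T, HasDerivAt G (G' s) s := fun s hs =>
    (hasDerivAt_log_one_div_sub_rpow hs.2 (hL s hs).ne').const_mul K
  have hF'G' : ∀ s ∈ Ico 0 T, |F' s| ≤ G' s := by
    intro s hs
    have hode' : |θ' s + θ s ^ (1 + m) * (c * (T - s)⁻¹ * L s ^ ν)|
        ≤ θ s ^ (1 + m) * (C₀ * (T - s)⁻¹ * L s ^ (ν - 1 / 2)) := by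
      simpa only [L, mul_comm, mul_left_comm, mul_assoc] using hode s hs
    have hF's : F' s = θ' s * (-m) * θ s ^ (-m - 1) - m * (c * (T - s)⁻¹ * L s ^ ν) := by
      simp only [F', add_sub_cancel_right]
      linear_combination (-((T - s)⁻¹ * L s ^ ν)) * hA
    have hG's : G' s = m * (C₀ * (T - s)⁻¹ * L s ^ (ν - 1 / 2)) := by
      simp only [G', show ν + 1 / 2 - 1 = ν - 1 / 2 by ring]
      linear_combination ((T - s)⁻¹ * L s ^ (ν - 1 / 2)) * hK
    rw [hF's, hG's]
    exact abs_mul_rpow_neg_sub_le hm (hθ s hs) hode'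
  have hIcc : Icc 0 t ⊆ Ico 0 T := Icc_subset_Ico_right ht.2
  have hbound := image_norm_le_of_norm_deriv_right_le_deriv_boundary' (a := 0) (b := t)
    (f := F) (f' := F') (B := fun s => |F 0| + (G s - G 0)) (B' := G')
    (fun s hs => (hF s (hIcc hs)).continuousWithinAt.mono hIcc)
    (fun s hs => (hF s (hIcc (Ico_subset_Icc_self hs))).mono_of_mem_nhdsWithin
      (Filter.mem_of_superset (Ico_mem_nhdsGE (hs.2.trans ht.2)) (Ico_subset_Ico_left hs.1)))
    (by simp)
    (fun s hs => ((hG s (hIcc hs)).continuousAt.continuousWithinAt.sub continuousWithinAt_const).const_add _)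
    (fun s hs => (((hG s (hIcc (Ico_subset_Icc_self hs))).sub_const (G 0)).const_add _).hasDerivWithinAt)
    (fun s hs => hF'G' s (hIcc (Ico_subset_Icc_self hs)))
    (right_mem_Icc.2 ht.1)
  simpa only [F, G, L, sub_zero, mul_sub, norm_eq_abs] using hbound

lemma abs_rpow_neg_sub_le_of_abs_deriv_add_le_of_abs_sub_le {ν m c C₀ T t : ℝ} {θ θ' : ℝ → ℝ}
    (hm : 0 ≤ m) (hν : 0 < ν + 1 / 2) (hC₀ : 0 ≤ C₀) (hT₀ : 0 < T) (hT : T < 1)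
    (hθ : ∀ s ∈ Ico 0 T, 0 < θ s) (hθ' : ∀ s ∈ Ico 0 T, HasDerivWithinAt θ (θ' s) (Ico 0 T) s)
    (hode : ∀ s ∈ Ico 0 T,
      |θ' s + c * θ s ^ (1 + m) * (T - s)⁻¹ * log (1 / (T - s)) ^ ν|
        ≤ C₀ * θ s ^ (1 + m) * (T - s)⁻¹ * log (1 / (T - s)) ^ (ν - 1 / 2))
    (hinit : |θ 0 ^ (-m) - c * m / (ν + 1) * log (1 / T) ^ (ν + 1)|
      ≤ C₀ * log (1 / T) ^ (ν + 1 / 2))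
    (ht : t ∈ Ico 0 T) :
    |θ t ^ (-m) - c * m / (ν + 1) * log (1 / (T - t)) ^ (ν + 1)|
      ≤ (C₀ + m * C₀ / (ν + 1 / 2)) * log (1 / (T - t)) ^ (ν + 1 / 2) := by
  have hL0 : 0 < log (1 / T) := log_pos (one_lt_one_div hT₀ hT)
  have hL0t : log (1 / T) ≤ log (1 / (T - t)) :=
    log_le_log (one_div_pos.2 hT₀) (one_div_le_one_div_of_le (sub_pos.2 ht.2) (by linarith [ht.1]))
  have hpow : log (1 / T) ^ (ν + 1 / 2) ≤ log (1 / (T - t)) ^ (ν + 1 / 2) :=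
    rpow_le_rpow hL0.le hL0t hν.le
  have hpow0 : 0 ≤ log (1 / T) ^ (ν + 1 / 2) := rpow_nonneg hL0.le _
  have hK : 0 ≤ m * C₀ / (ν + 1 / 2) := by positivity
  have hintegrated := abs_rpow_neg_sub_le_of_abs_deriv_add_le hm hν hT hθ hθ' hode ht
  rw [add_mul]
  linarith [mul_le_mul_of_nonneg_left hpow hC₀, mul_nonneg hK hpow0]

/-- ODE integration underlying the dynamics of the nonlocal term: if
`θ' ≈ -c θ^(1+m) (T-t)^(-1) L(t)^ν` with error of relative size `L^(-1/2)` and the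
initial value satisfies `θ(0)^(-m) ≈ (cm/(ν+1)) L(0)^(ν+1)`, then
`θ(t) ≈ θ_* L(t)^(-β)` with `β = (ν+1)/m`, `θ_* = (cm/(ν+1))^(-1/m)`, up to
errors of relative size `L^(-1/2)`, where `L(t) = log(1/(T-t))`. -/
theorem stmt11 (ν m c C₀ : ℝ) (hν : 0 < ν) (hm : 0 < m) (hc : 0 < c) (hC₀ : 0 < C₀) :
    ∃ T₀ ∈ Set.Ioo (0 : ℝ) (Real.exp (-1)), ∃ C₁ > (0 : ℝ),
      ∀ T ∈ Set.Ioc (0 : ℝ) T₀, ∀ θ θ' : ℝ → ℝ,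
        (∀ t ∈ Set.Ico (0 : ℝ) T, 0 < θ t) →
        (∀ t ∈ Set.Ico (0 : ℝ) T, HasDerivWithinAt θ (θ' t) (Set.Ico 0 T) t) →
        (∀ t ∈ Set.Ico (0 : ℝ) T,
          |θ' t + c * θ t ^ (1 + m) * (T - t)⁻¹ * Real.log (1 / (T - t)) ^ ν|
            ≤ C₀ * θ t ^ (1 + m) * (T - t)⁻¹ * Real.log (1 / (T - t)) ^ (ν - 1 / 2)) →
        |θ 0 ^ (-m) - (c * m / (ν + 1)) * Real.log (1 / T) ^ (ν + 1)|
          ≤ C₀ * Real.log (1 / T) ^ (ν + 1 / 2) →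
        ∀ t ∈ Set.Ico (0 : ℝ) T,
          |θ t - (c * m / (ν + 1)) ^ (-(1 / m)) * Real.log (1 / (T - t)) ^ (-((ν + 1) / m))|
            ≤ C₁ * Real.log (1 / (T - t)) ^ (-((ν + 1) / m) - 1 / 2) := by
  set A := c * m / (ν + 1)
  have hA : 0 < A := by positivity
  set K := C₀ + m * C₀ / (ν + 1 / 2)
  have hK : 0 < K := by positivity
  -- `M ≥ (2K/A)²` keeps the relative error `(K/A) L^(-1/2)` of `θ^(-m)` below `1/2`
  set M := max 2 ((2 * K / A) ^ 2)
  have hM : 1 < M := by linarith [le_max_left 2 ((2 * K / A) ^ 2)]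
  refine ⟨exp (-M), ⟨exp_pos _, exp_lt_exp.2 (by linarith)⟩,
    1 / m * 2 ^ (1 + 1 / m) * (K / A) * A ^ (-(1 / m)), by positivity, ?_⟩
  intro T hT θ θ' hθ hθ' hode hinit t ht
  have hLM : M ≤ log (1 / (T - t)) :=
    le_log_one_div_of_le_exp_neg (sub_pos.2 ht.2) (by linarith [ht.1, hT.2])
  have hFt : |θ t ^ (-m) - A * log (1 / (T - t)) ^ (ν + 1)|
      ≤ K * log (1 / (T - t)) ^ (ν + 1 - 1 / 2) := by
    rw [show ν + 1 - 1 / 2 = ν + 1 / 2 by ring]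
    exact abs_rpow_neg_sub_le_of_abs_deriv_add_le_of_abs_sub_le hm.le (by linarith) hC₀.le hT.1
      (hT.2.trans_lt (exp_lt_one_iff.2 (by linarith))) hθ hθ' hode hinit ht
  have key := abs_rpow_sub_mul_rpow_le (p := -(1 / m)) (by linarith [one_div_pos.2 hm]) hA
    (by linarith) ((le_max_right _ _).trans hLM) hFt
  rwa [← rpow_mul (hθ t ht).le, neg_mul_neg, mul_one_div_cancel hm.ne', rpow_one, abs_neg,
    abs_of_pos (one_div_pos.2 hm), sub_neg_eq_add, show (ν + 1) * -(1 / m) = -((ν + 1) / m) by ring]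
    at key
end

section
/- Let β ∈ ℝ, δ > 0, C₀ > 0 and s₀ ≥ 1 be real numbers, and let θ : [s₀, ∞) → (0, ∞) be differentiable with |θ'(s)/θ(s) + β/s| ≤ C₀·s^{−1−δ} for all s ≥ s₀. Then there exist θ_∞ > 0 and C₁ > 0 such that |θ(s)·s^{β} − θ_∞| ≤ C₁·θ_∞·s^{−δ} for all s ≥ s₀. -/
/-!
Put `g s = log θ(s) + β log s` and `E s = (C₀/δ) s^(-δ)`. The hypothesis says `|g'| ≤ -E'`, so
`g + E` decreases and `g - E` increases on `[s₀, ∞)`; hence `L = inf (g + E)` satisfies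
`|g - L| ≤ E`. Since `θ(s) s^β = exp (g s)`, the constant `θ_∞ = exp L` works, by the
estimate `|exp x - exp L| ≤ |x - L| exp |x - L| exp L`.
-/

open Set Real

namespace Real

theorem abs_exp_sub_one_le_mul_exp_abs (x : ℝ) : |exp x - 1| ≤ |x| * exp |x| := by
  rcases le_or_gt 0 x with hx | hx
  · have : (1 - x) * exp x ≤ 1 := by
      simpa [← exp_add] using mul_le_mul_of_nonneg_right (by linarith [add_one_le_exp (-x)] :
        1 - x ≤ exp (-x)) (exp_pos x).le
    rw [abs_of_nonneg hx, abs_of_nonneg (by linarith [one_le_exp hx])]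
    linarith
  · rw [abs_of_neg hx, abs_of_nonpos (by linarith [exp_lt_one_iff.mpr hx])]
    nlinarith [add_one_le_exp x, one_le_exp (by linarith : 0 ≤ -x)]

theorem abs_exp_sub_exp_le {x y ε : ℝ} (h : |x - y| ≤ ε) :
    |exp x - exp y| ≤ ε * exp ε * exp y := by
  have hsplit : exp x - exp y = exp y * (exp (x - y) - 1) := by
    rw [mul_sub, ← exp_add]; ring_nf
  calc |exp x - exp y| = exp y * |exp (x - y) - 1| := by
        rw [hsplit, abs_mul, abs_of_pos (exp_pos y)]
    _ ≤ exp y * (|x - y| * exp |x - y|) :=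
        mul_le_mul_of_nonneg_left (abs_exp_sub_one_le_mul_exp_abs _) (exp_pos y).le
    _ ≤ exp y * (ε * exp ε) := by have := (abs_nonneg _).trans h; gcongr
    _ = ε * exp ε * exp y := by ring

end Real

theorem exists_abs_sub_le_of_antitoneOn_add_of_monotoneOn_sub {α : Type*} [LinearOrder α]
    {g E : α → ℝ} {S : Set α} (hS : S.Nonempty) (hE : ∀ x ∈ S, 0 ≤ E x)
    (hanti : AntitoneOn (g + E) S) (hmono : MonotoneOn (g - E) S) :
    ∃ L, ∀ x ∈ S, |g x - L| ≤ E x := by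
  have hle : ∀ x ∈ S, ∀ y ∈ S, (g - E) x ≤ (g + E) y := by
    intro x hx y hy
    rcases le_total x y with hxy | hyx
    · calc (g - E) x ≤ (g - E) y := hmono hx hy hxy
        _ ≤ (g + E) y := by simp only [Pi.sub_apply, Pi.add_apply]; linarith [hE y hy]
    · calc (g - E) x ≤ (g + E) x := by simp only [Pi.sub_apply, Pi.add_apply]; linarith [hE x hx]
        _ ≤ (g + E) y := hanti hy hx hyx
  obtain ⟨x₀, hx₀⟩ := hS
  have hbdd : BddBelow ((g + E) '' S) := ⟨(g - E) x₀, forall_mem_image.2 (hle x₀ hx₀)⟩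
  set L := sInf ((g + E) '' S)
  refine ⟨L, fun x hx => abs_sub_le_iff.2 ⟨?_, ?_⟩⟩
  · have : (g - E) x ≤ L := le_csInf (.image _ ⟨x₀, hx₀⟩) (forall_mem_image.2 (hle x hx))
    simp only [Pi.sub_apply] at this; linarith
  · have : L ≤ (g + E) x := csInf_le hbdd (mem_image_of_mem _ hx)
    simp only [Pi.add_apply] at this; linarith

theorem exists_abs_sub_le_of_abs_deriv_le_neg_deriv {g g' E E' : ℝ → ℝ} {a : ℝ}
    (hg : ∀ x ≥ a, HasDerivWithinAt g (g' x) (Ici a) x)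
    (hE : ∀ x ≥ a, HasDerivWithinAt E (E' x) (Ici a) x)
    (hE₀ : ∀ x ≥ a, 0 ≤ E x) (hbound : ∀ x > a, |g' x| ≤ -E' x) :
    ∃ L, ∀ x ≥ a, |g x - L| ≤ E x := by
  have hinterior : ∀ {f f' : ℝ → ℝ}, (∀ x ≥ a, HasDerivWithinAt f (f' x) (Ici a) x) →
      ∀ x ∈ interior (Ici a), HasDerivWithinAt f (f' x) (interior (Ici a)) x := by
    intro f f' hf x hx
    rw [interior_Ici] at hx ⊢
    exact (hf x hx.le).mono Ioi_subset_Ici_self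
  have hgE : ∀ x ≥ a, HasDerivWithinAt (g + E) (g' x + E' x) (Ici a) x :=
    fun x hx => (hg x hx).add (hE x hx)
  have hgE' : ∀ x ≥ a, HasDerivWithinAt (g - E) (g' x - E' x) (Ici a) x :=
    fun x hx => (hg x hx).sub (hE x hx)
  refine exists_abs_sub_le_of_antitoneOn_add_of_monotoneOn_sub nonempty_Ici hE₀ ?_ ?_
  · refine antitoneOn_of_hasDerivWithinAt_nonpos (convex_Ici a)
      (fun x hx => (hgE x hx).continuousWithinAt) (hinterior hgE) fun x hx => ?_
    rw [interior_Ici] at hx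
    linarith [le_abs_self (g' x), hbound x hx]
  · refine monotoneOn_of_hasDerivWithinAt_nonneg (convex_Ici a)
      (fun x hx => (hgE' x hx).continuousWithinAt) (hinterior hgE') fun x hx => ?_
    rw [interior_Ici] at hx
    linarith [neg_abs_le (g' x), hbound x hx]

theorem hasDerivAt_div_mul_rpow_neg {C δ x : ℝ} (hδ : δ ≠ 0) (hx : x ≠ 0) :
    HasDerivAt (fun t => C / δ * t ^ (-δ)) (-(C * x ^ (-1 - δ))) x := by
  refine ((hasDerivAt_rpow_const (p := -δ) (Or.inl hx)).const_mul (C / δ)).congr_deriv ?_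
  rw [show -δ - 1 = -1 - δ by ring]
  field_simp

theorem hasDerivWithinAt_log_add_const_mul_log {θ θ' : ℝ → ℝ} {β x : ℝ} {s : Set ℝ}
    (hθ : HasDerivWithinAt θ (θ' x) s x) (hθx : θ x ≠ 0) (hx : x ≠ 0) :
    HasDerivWithinAt (fun t => log (θ t) + β * log t) (θ' x / θ x + β / x) s x := by
  simpa only [div_eq_mul_inv] using
    (hθ.log hθx).fun_add ((hasDerivAt_log hx).hasDerivWithinAt.const_mul β)

/-- Asymptotic integration: if `θ > 0` is differentiable on `[s₀,∞)` with
`|θ'/θ + β/s| ≤ C₀ s^(-1-δ)`, then `θ(s) s^β` stays within relative distance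
`C₁ s^(-δ)` of some positive constant `θ_∞`. -/
theorem stmt12 (β δ C₀ s₀ : ℝ) (hδ : 0 < δ) (hC₀ : 0 < C₀) (hs₀ : 1 ≤ s₀)
    (θ θ' : ℝ → ℝ)
    (hpos : ∀ s ≥ s₀, 0 < θ s)
    (hderiv : ∀ s ≥ s₀, HasDerivWithinAt θ (θ' s) (Set.Ici s₀) s)
    (hbound : ∀ s ≥ s₀, |θ' s / θ s + β / s| ≤ C₀ * s ^ (-1 - δ)) :
    ∃ θ_inf > (0 : ℝ), ∃ C₁ > (0 : ℝ), ∀ s ≥ s₀,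
      |θ s * s ^ β - θ_inf| ≤ C₁ * θ_inf * s ^ (-δ) := by
  have hs_pos : ∀ s ≥ s₀, 0 < s := fun s hs => by linarith
  have hM : 0 < C₀ / δ := div_pos hC₀ hδ
  have hE_nonneg : ∀ s ≥ s₀, 0 ≤ C₀ / δ * s ^ (-δ) :=
    fun s hs => mul_nonneg hM.le (rpow_nonneg (hs_pos s hs).le _)
  obtain ⟨L, hL⟩ := exists_abs_sub_le_of_abs_deriv_le_neg_deriv
    (fun s hs =>
      hasDerivWithinAt_log_add_const_mul_log (hderiv s hs) (hpos s hs).ne' (hs_pos s hs).ne')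
    (fun s hs => (hasDerivAt_div_mul_rpow_neg hδ.ne' (hs_pos s hs).ne').hasDerivWithinAt)
    hE_nonneg
    (fun s hs => (neg_neg (C₀ * s ^ (-1 - δ))).symm ▸ hbound s hs.le)
  refine ⟨exp L, exp_pos L, C₀ / δ * exp (C₀ / δ), by positivity, fun s hs => ?_⟩
  have hexp : θ s * s ^ β = exp (log (θ s) + β * log s) := by
    rw [exp_add, exp_log (hpos s hs), rpow_def_of_pos (hs_pos s hs), mul_comm β]
  have hdecay : C₀ / δ * s ^ (-δ) ≤ C₀ / δ :=
    mul_le_of_le_one_right hM.le (rpow_le_one_of_one_le_of_nonpos (hs₀.trans hs) (by linarith))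
  rw [hexp]
  calc |exp (log (θ s) + β * log s) - exp L|
      ≤ C₀ / δ * s ^ (-δ) * exp (C₀ / δ * s ^ (-δ)) * exp L := abs_exp_sub_exp_le (hL s hs)
    _ ≤ C₀ / δ * s ^ (-δ) * exp (C₀ / δ) * exp L := by
        have := hE_nonneg s hs; gcongr
    _ = C₀ / δ * exp (C₀ / δ) * exp L * s ^ (-δ) := by ring
end

section
/- Let N ≥ 1 be an integer and K₀ ≥ 1 a real number. There exists a constant C > 0, depending only on N and K₀, such that for all real A ≥ 1 and s ≥ 1 the following holds. Suppose q : ℝ^N → ℝ can be written as q(y) = P(y) + q₋(y) + q_e(y), where P(y) = q₀ + ⟨q₁, y⟩ + ⟨y, Q₂ y⟩ − 2·tr(Q₂) with q₀ ∈ ℝ, q₁ ∈ ℝ^N and Q₂ a symmetric N×N real matrix, and the following bounds hold: |q₀| ≤ A³·s^{−3/2}; |q₁| ≤ A·s^{−2}; every entry of Q₂ has absolute value at most A⁴·s^{−3/2}; |q₋(y)| ≤ A⁶·(1+|y|³)·s^{−2} for all y; |q_e(y)| ≤ A⁷·s^{−1/2} for all y, with q_e(y) = 0 whenever |y| ≤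 K₀√s; and P(y) + q₋(y) = 0 whenever |y| ≥ 2K₀√s. Then for all y ∈ ℝ^N: |q(y)| ≤ C·A⁷·s^{−1/2} and |q(y)| ≤ C·A⁷·(1+|y|³)·s^{−3/2}. -/
open RealInnerProductSpace

lemma coord_le_norm {N : ℕ} (y : EuclideanSpace ℝ (Fin N)) (i : Fin N) : |y i| ≤ ‖y‖ := by
  rw [EuclideanSpace.norm_eq, ← Real.sqrt_sq_eq_abs]
  apply Real.sqrt_le_sqrt
  simpa [Real.norm_eq_abs, sq_abs] using
    Finset.single_le_sum (f := fun j => ‖y j‖ ^ 2) (fun j _ => sq_nonneg _) (Finset.mem_univ i)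

lemma le_one_add_cube {u : ℝ} (hu : 0 ≤ u) : u ≤ 1 + u ^ 3 := by
  nlinarith [sq_nonneg (u - 1), mul_nonneg (sq_nonneg (u - 1)) hu]

lemma sq_le_one_add_cube {u : ℝ} (hu : 0 ≤ u) : u ^ 2 ≤ 1 + u ^ 3 := by
  nlinarith [sq_nonneg (u - 1), mul_nonneg (sq_nonneg (u - 1)) hu]

/-- Growth estimates in the shrinking set: if `q = P + q₋ + q_e` where
`P(y) = q₀ + ⟨q₁,y⟩ + ⟨y,Q₂y⟩ - 2 tr Q₂` with the `V_{K₀,A}(s)` bounds,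
`q_e` vanishes for `|y| ≤ K₀√s` and `P + q₋` vanishes for `|y| ≥ 2K₀√s`,
then `|q(y)| ≤ C A⁷ s^(-1/2)` and `|q(y)| ≤ C A⁷ (1+|y|³) s^(-3/2)`. -/
theorem stmt14 (N : ℕ) (hN : 1 ≤ N) (K₀ : ℝ) (hK₀ : 1 ≤ K₀) :
    ∃ C > (0 : ℝ), ∀ A s : ℝ, 1 ≤ A → 1 ≤ s →
      ∀ (q qm qe : EuclideanSpace ℝ (Fin N) → ℝ)
        (q₀ : ℝ) (q₁ : EuclideanSpace ℝ (Fin N)) (Q₂ : Matrix (Fin N) (Fin N) ℝ),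
        Q₂.IsSymm →
        (∀ y : EuclideanSpace ℝ (Fin N),
          q y = q₀ + ⟪q₁, y⟫ + (∑ i, ∑ j, Q₂ i j * y i * y j) - 2 * Matrix.trace Q₂
            + qm y + qe y) →
        |q₀| ≤ A ^ 3 * s ^ (-(3 / 2) : ℝ) →
        ‖q₁‖ ≤ A * s ^ (-2 : ℝ) →
        (∀ i j, |Q₂ i j| ≤ A ^ 4 * s ^ (-(3 / 2) : ℝ)) →
        (∀ y : EuclideanSpace ℝ (Fin N), |qm y| ≤ A ^ 6 * (1 + ‖y‖ ^ 3) * s ^ (-2 : ℝ)) →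
        (∀ y : EuclideanSpace ℝ (Fin N), |qe y| ≤ A ^ 7 * s ^ (-(1 / 2) : ℝ)) →
        (∀ y : EuclideanSpace ℝ (Fin N), ‖y‖ ≤ K₀ * Real.sqrt s → qe y = 0) →
        (∀ y : EuclideanSpace ℝ (Fin N), 2 * K₀ * Real.sqrt s ≤ ‖y‖ →
          q₀ + ⟪q₁, y⟫ + (∑ i, ∑ j, Q₂ i j * y i * y j) - 2 * Matrix.trace Q₂ + qm y = 0) →
        ∀ y : EuclideanSpace ℝ (Fin N),
          |q y| ≤ C * A ^ 7 * s ^ (-(1 / 2) : ℝ) ∧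
          |q y| ≤ C * A ^ 7 * (1 + ‖y‖ ^ 3) * s ^ (-(3 / 2) : ℝ) := by
  refine ⟨(N : ℝ) ^ 2 + 2 * N + 9 * K₀ ^ 3 + 4 * N ^ 2 * K₀ ^ 2 + 2 * K₀ + 2, by positivity, ?_⟩
  set C : ℝ := (N : ℝ) ^ 2 + 2 * N + 9 * K₀ ^ 3 + 4 * N ^ 2 * K₀ ^ 2 + 2 * K₀ + 2 with hC
  have hN1 : (1:ℝ) ≤ (N:ℝ) := by exact_mod_cast hN
  have hK0' : (0:ℝ) < K₀ := lt_of_lt_of_le one_pos hK₀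
  have hK2 : (1:ℝ) ≤ K₀ ^ 2 := by nlinarith
  have hK3 : (1:ℝ) ≤ K₀ ^ 3 := by nlinarith
  have hNsq : (1:ℝ) ≤ (N:ℝ) ^ 2 := by nlinarith
  have hNK : (1:ℝ) ≤ (N:ℝ) ^ 2 * K₀ ^ 2 := by nlinarith
  have hC1 : (1:ℝ) ≤ C := by rw [hC]; nlinarith
  have hCcoef1 : 1 + 2 * K₀ + 4 * (N:ℝ) ^ 2 * K₀ ^ 2 + 2 * N + 9 * K₀ ^ 3 + 1 ≤ C := by
    rw [hC]; nlinarith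
  have hCcoef2 : (N:ℝ) ^ 2 + 2 * (N:ℝ) + 4 ≤ C := by rw [hC]; nlinarith
  clear hC
  intro A s hA hs q qm qe q₀ q₁ Q₂ _hsym hq hq0 hq1 hQ2 hqm hqe hqe0 hvan y
  have hs0 : (0:ℝ) < s := lt_of_lt_of_le one_pos hs
  have hA0 : (0:ℝ) < A := lt_of_lt_of_le one_pos hA
  -- rpow facts
  have e2pos : (0:ℝ) < s ^ (-2 : ℝ) := Real.rpow_pos_of_pos hs0 _
  have e32pos : (0:ℝ) < s ^ (-(3/2) : ℝ) := Real.rpow_pos_of_pos hs0 _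
  have e12pos : (0:ℝ) < s ^ (-(1/2) : ℝ) := Real.rpow_pos_of_pos hs0 _
  have h22 : s ^ (-2 : ℝ) ≤ s ^ (-(3/2) : ℝ) :=
    Real.rpow_le_rpow_of_exponent_le hs (by norm_num)
  have h21 : s ^ (-(3/2) : ℝ) ≤ s ^ (-(1/2) : ℝ) :=
    Real.rpow_le_rpow_of_exponent_le hs (by norm_num)
  set t := Real.sqrt s with htdef
  have ht1 : (1:ℝ) ≤ t := by
    rw [htdef, show (1:ℝ) = Real.sqrt 1 from (Real.sqrt_one).symm]
    exact Real.sqrt_le_sqrt hs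
  have ht0 : (0:ℝ) ≤ t := le_trans zero_le_one ht1
  have ht2 : t ^ 2 = s := Real.sq_sqrt hs0.le
  have ht3 : t ^ 3 = s ^ ((3:ℝ)/2) := by
    rw [htdef, Real.sqrt_eq_rpow, ← Real.rpow_natCast (s ^ ((1:ℝ)/2)) 3,
      ← Real.rpow_mul hs0.le]
    norm_num
  have pA : t * s ^ (-2 : ℝ) = s ^ (-(3/2) : ℝ) := by
    rw [htdef, Real.sqrt_eq_rpow, ← Real.rpow_add hs0]; norm_num
  have pB : s * s ^ (-(3/2) : ℝ) = s ^ (-(1/2) : ℝ) := by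
    rw [show s * s ^ (-(3/2) : ℝ) = s ^ (1:ℝ) * s ^ (-(3/2) : ℝ) from by rw [Real.rpow_one],
      ← Real.rpow_add hs0]
    norm_num
  have pC : s ^ ((3:ℝ)/2) * s ^ (-2 : ℝ) = s ^ (-(1/2) : ℝ) := by
    rw [← Real.rpow_add hs0]; norm_num
  have hs32 : s ≤ s ^ ((3:ℝ)/2) := by
    calc s = s ^ (1:ℝ) := (Real.rpow_one s).symm
    _ ≤ s ^ ((3:ℝ)/2) := Real.rpow_le_rpow_of_exponent_le hs (by norm_num)
  have h32ge1 : (1:ℝ) ≤ s ^ ((3:ℝ)/2) := Real.one_le_rpow hs (by norm_num)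
  -- powers of A
  have hA37 : A ^ 3 ≤ A ^ 7 := pow_le_pow_right₀ hA (by norm_num)
  have hA17 : A ≤ A ^ 7 := by calc A = A ^ 1 := (pow_one A).symm
                                 _ ≤ A ^ 7 := pow_le_pow_right₀ hA (by norm_num)
  have hA47 : A ^ 4 ≤ A ^ 7 := pow_le_pow_right₀ hA (by norm_num)
  have hA67 : A ^ 6 ≤ A ^ 7 := pow_le_pow_right₀ hA (by norm_num)
  have hA7pos : (0:ℝ) < A ^ 7 := pow_pos hA0 7
  set u := ‖y‖ with hu
  have hu0 : (0:ℝ) ≤ u := norm_nonneg y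
  set M : ℝ := A ^ 4 * s ^ (-(3/2) : ℝ) with hM
  have hMpos : (0:ℝ) ≤ M := by positivity
  -- termwise bounds
  have t1 : |⟪q₁, y⟫| ≤ A * s ^ (-2 : ℝ) * u := by
    calc |⟪q₁, y⟫| ≤ ‖q₁‖ * ‖y‖ := abs_real_inner_le_norm q₁ y
    _ ≤ A * s ^ (-2 : ℝ) * u := mul_le_mul_of_nonneg_right hq1 hu0
  have t2 : |∑ i, ∑ j, Q₂ i j * y i * y j| ≤ (N:ℝ) ^ 2 * M * u ^ 2 := by
    have hterm : ∀ i j : Fin N, |Q₂ i j * y i * y j| ≤ M * u ^ 2 := by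
      intro i j
      rw [abs_mul, abs_mul]
      calc |Q₂ i j| * |y i| * |y j| ≤ M * u * u := by
            apply mul_le_mul _ (coord_le_norm y j) (abs_nonneg _) (by positivity)
            exact mul_le_mul (hQ2 i j) (coord_le_norm y i) (abs_nonneg _) hMpos
        _ = M * u ^ 2 := by ring
    calc |∑ i, ∑ j, Q₂ i j * y i * y j| ≤ ∑ i, |∑ j, Q₂ i j * y i * y j| :=
          Finset.abs_sum_le_sum_abs _ _
      _ ≤ ∑ _i : Fin N, ∑ _j : Fin N, (M * u ^ 2) := by
          apply Finset.sum_le_sum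
          intro i _
          exact le_trans (Finset.abs_sum_le_sum_abs _ _)
            (Finset.sum_le_sum fun j _ => hterm i j)
      _ = (N:ℝ) ^ 2 * M * u ^ 2 := by
          simp [Finset.sum_const, Finset.card_univ]
          ring
  have t3 : |Matrix.trace Q₂| ≤ (N:ℝ) * M := by
    calc |Matrix.trace Q₂| = |∑ i, Q₂ i i| := by simp [Matrix.trace, Matrix.diag]
      _ ≤ ∑ i, |Q₂ i i| := Finset.abs_sum_le_sum_abs _ _
      _ ≤ ∑ _i : Fin N, M := Finset.sum_le_sum fun i _ => hQ2 i i
      _ = (N:ℝ) * M := by simp [Finset.sum_const, Finset.card_univ]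
  have hin : |q₀ + ⟪q₁, y⟫ + (∑ i, ∑ j, Q₂ i j * y i * y j) - 2 * Matrix.trace Q₂ + qm y|
      ≤ A ^ 3 * s ^ (-(3/2) : ℝ) + A * s ^ (-2 : ℝ) * u + (N:ℝ) ^ 2 * M * u ^ 2
        + 2 * ((N:ℝ) * M) + A ^ 6 * (1 + u ^ 3) * s ^ (-2 : ℝ) := by
    have habs : |q₀ + ⟪q₁, y⟫ + (∑ i, ∑ j, Q₂ i j * y i * y j) - 2 * Matrix.trace Q₂ + qm y|
        ≤ |q₀| + |⟪q₁, y⟫| + |∑ i, ∑ j, Q₂ i j * y i * y j| + |2 * Matrix.trace Q₂| + |qm y| := by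
      calc _ ≤ |q₀ + ⟪q₁, y⟫ + (∑ i, ∑ j, Q₂ i j * y i * y j) - 2 * Matrix.trace Q₂| + |qm y| :=
            abs_add_le _ _
        _ ≤ |q₀ + ⟪q₁, y⟫ + (∑ i, ∑ j, Q₂ i j * y i * y j)| + |2 * Matrix.trace Q₂| + |qm y| := by
            gcongr
            exact abs_sub _ _
        _ ≤ |q₀ + ⟪q₁, y⟫| + |∑ i, ∑ j, Q₂ i j * y i * y j| + |2 * Matrix.trace Q₂| + |qm y| := by
            gcongr
            exact abs_add_le _ _
        _ ≤ |q₀| + |⟪q₁, y⟫| + |∑ i, ∑ j, Q₂ i j * y i * y j| + |2 * Matrix.trace Q₂| + |qm y| := by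
            gcongr
            exact abs_add_le _ _
    have h2tr : |2 * Matrix.trace Q₂| ≤ 2 * ((N:ℝ) * M) := by
      rw [abs_mul, abs_two]
      exact mul_le_mul_of_nonneg_left t3 (by norm_num)
    calc _ ≤ |q₀| + |⟪q₁, y⟫| + |∑ i, ∑ j, Q₂ i j * y i * y j| + |2 * Matrix.trace Q₂| + |qm y| :=
          habs
      _ ≤ _ :=
          add_le_add (add_le_add (add_le_add (add_le_add hq0 t1) t2) h2tr) (hqm y)
  constructor
  · -- first bound
    by_cases hy : 2 * K₀ * t ≤ u
    · have hzero := hvan y hy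
      have : q y = qe y := by rw [hq y, hzero]; ring
      rw [this]
      calc |qe y| ≤ A ^ 7 * s ^ (-(1/2) : ℝ) := hqe y
        _ ≤ C * (A ^ 7 * s ^ (-(1/2) : ℝ)) := le_mul_of_one_le_left (by positivity) hC1
        _ = C * A ^ 7 * s ^ (-(1/2) : ℝ) := (mul_assoc _ _ _).symm
    · push_neg at hy
      have hu2 : u ≤ 2 * K₀ * t := hy.le
      -- individual term bounds against A^7 * s^(-1/2)
      have b0 : A ^ 3 * s ^ (-(3/2) : ℝ) ≤ A ^ 7 * s ^ (-(1/2) : ℝ) :=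
        mul_le_mul hA37 h21 e32pos.le (by positivity)
      have b1 : A * s ^ (-2 : ℝ) * u ≤ 2 * K₀ * (A ^ 7 * s ^ (-(1/2) : ℝ)) := by
        calc A * s ^ (-2 : ℝ) * u ≤ A * s ^ (-2 : ℝ) * (2 * K₀ * t) := by
              apply mul_le_mul_of_nonneg_left hu2 (by positivity)
          _ = 2 * K₀ * (A * (t * s ^ (-2 : ℝ))) := by ring
          _ = 2 * K₀ * (A * s ^ (-(3/2) : ℝ)) := by rw [pA]
          _ ≤ 2 * K₀ * (A ^ 7 * s ^ (-(1/2) : ℝ)) := by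
              apply mul_le_mul_of_nonneg_left _ (by positivity)
              exact mul_le_mul hA17 h21 e32pos.le (by positivity)
      have b2 : (N:ℝ) ^ 2 * M * u ^ 2 ≤ 4 * N ^ 2 * K₀ ^ 2 * (A ^ 7 * s ^ (-(1/2) : ℝ)) := by
        have hu2sq : u ^ 2 ≤ 4 * K₀ ^ 2 * s := by
          calc u ^ 2 ≤ (2 * K₀ * t) ^ 2 := pow_le_pow_left₀ hu0 hu2 2
            _ = 4 * K₀ ^ 2 * t ^ 2 := by ring
            _ = 4 * K₀ ^ 2 * s := by rw [ht2]
        calc (N:ℝ) ^ 2 * M * u ^ 2 ≤ (N:ℝ) ^ 2 * M * (4 * K₀ ^ 2 * s) := by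
              apply mul_le_mul_of_nonneg_left hu2sq (by positivity)
          _ = 4 * N ^ 2 * K₀ ^ 2 * (A ^ 4 * (s * s ^ (-(3/2) : ℝ))) := by rw [hM]; ring
          _ = 4 * N ^ 2 * K₀ ^ 2 * (A ^ 4 * s ^ (-(1/2) : ℝ)) := by rw [pB]
          _ ≤ 4 * N ^ 2 * K₀ ^ 2 * (A ^ 7 * s ^ (-(1/2) : ℝ)) := by
              apply mul_le_mul_of_nonneg_left _ (by positivity)
              exact mul_le_mul_of_nonneg_right hA47 e12pos.le
      have b3 : 2 * ((N:ℝ) * M) ≤ 2 * N * (A ^ 7 * s ^ (-(1/2) : ℝ)) := by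
        have h1 : M ≤ A ^ 7 * s ^ (-(1/2) : ℝ) := by
          rw [hM]; exact mul_le_mul hA47 h21 e32pos.le (by positivity)
        calc 2 * ((N:ℝ) * M) = 2 * N * M := by ring
          _ ≤ 2 * N * (A ^ 7 * s ^ (-(1/2) : ℝ)) :=
            mul_le_mul_of_nonneg_left h1 (by positivity)
      have b4 : A ^ 6 * (1 + u ^ 3) * s ^ (-2 : ℝ) ≤ 9 * K₀ ^ 3 * (A ^ 7 * s ^ (-(1/2) : ℝ)) := by
        have hu3 : 1 + u ^ 3 ≤ 9 * K₀ ^ 3 * s ^ ((3:ℝ)/2) := by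
          have h1 : u ^ 3 ≤ 8 * K₀ ^ 3 * t ^ 3 := by
            calc u ^ 3 ≤ (2 * K₀ * t) ^ 3 := pow_le_pow_left₀ hu0 hu2 3
              _ = 8 * K₀ ^ 3 * t ^ 3 := by ring
          have h2 : (1:ℝ) ≤ K₀ ^ 3 * s ^ ((3:ℝ)/2) := by
            calc (1:ℝ) = 1 * 1 := (one_mul 1).symm
              _ ≤ K₀ ^ 3 * s ^ ((3:ℝ)/2) :=
                mul_le_mul hK3 h32ge1 zero_le_one (le_trans zero_le_one hK3)
          rw [ht3] at h1
          linarith only [h1, h2]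
        calc A ^ 6 * (1 + u ^ 3) * s ^ (-2 : ℝ)
            ≤ A ^ 6 * (9 * K₀ ^ 3 * s ^ ((3:ℝ)/2)) * s ^ (-2 : ℝ) := by
              apply mul_le_mul_of_nonneg_right _ e2pos.le
              exact mul_le_mul_of_nonneg_left hu3 (by positivity)
          _ = 9 * K₀ ^ 3 * (A ^ 6 * (s ^ ((3:ℝ)/2) * s ^ (-2 : ℝ))) := by ring
          _ = 9 * K₀ ^ 3 * (A ^ 6 * s ^ (-(1/2) : ℝ)) := by rw [pC]
          _ ≤ 9 * K₀ ^ 3 * (A ^ 7 * s ^ (-(1/2) : ℝ)) := by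
              apply mul_le_mul_of_nonneg_left _ (by positivity)
              exact mul_le_mul_of_nonneg_right hA67 e12pos.le
      have bqe : |qe y| ≤ A ^ 7 * s ^ (-(1/2) : ℝ) := hqe y
      have hqy : |q y| ≤ (1 + 2 * K₀ + 4 * N ^ 2 * K₀ ^ 2 + 2 * N + 9 * K₀ ^ 3 + 1)
          * (A ^ 7 * s ^ (-(1/2) : ℝ)) := by
        rw [hq y]
        calc |q₀ + ⟪q₁, y⟫ + (∑ i, ∑ j, Q₂ i j * y i * y j) - 2 * Matrix.trace Q₂ + qm y + qe y|
            ≤ |q₀ + ⟪q₁, y⟫ + (∑ i, ∑ j, Q₂ i j * y i * y j) - 2 * Matrix.trace Q₂ + qm y|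
              + |qe y| := abs_add_le _ _
          _ ≤ _ := by
              linarith only [hin, b0, b1, b2, b3, b4, bqe]
      calc |q y| ≤ (1 + 2 * K₀ + 4 * N ^ 2 * K₀ ^ 2 + 2 * N + 9 * K₀ ^ 3 + 1)
            * (A ^ 7 * s ^ (-(1/2) : ℝ)) := hqy
        _ ≤ C * (A ^ 7 * s ^ (-(1/2) : ℝ)) := by
            apply mul_le_mul_of_nonneg_right _ (by positivity)
            linarith only [hCcoef1]
        _ = C * A ^ 7 * s ^ (-(1/2) : ℝ) := (mul_assoc _ _ _).symm
  · -- second bound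
    have b0 : A ^ 3 * s ^ (-(3/2) : ℝ) ≤ A ^ 7 * (1 + u ^ 3) * s ^ (-(3/2) : ℝ) := by
      apply mul_le_mul_of_nonneg_right _ e32pos.le
      calc A ^ 3 ≤ A ^ 7 := hA37
        _ ≤ A ^ 7 * (1 + u ^ 3) := le_mul_of_one_le_right (by positivity)
            (by linarith only [pow_nonneg hu0 3])
    have b1 : A * s ^ (-2 : ℝ) * u ≤ A ^ 7 * (1 + u ^ 3) * s ^ (-(3/2) : ℝ) := by
      calc A * s ^ (-2 : ℝ) * u ≤ A ^ 7 * s ^ (-(3/2) : ℝ) * (1 + u ^ 3) := by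
            apply mul_le_mul (mul_le_mul hA17 h22 e2pos.le (by positivity))
              (le_one_add_cube hu0) hu0 (by positivity)
        _ = A ^ 7 * (1 + u ^ 3) * s ^ (-(3/2) : ℝ) := by ring
    have b2 : (N:ℝ) ^ 2 * M * u ^ 2 ≤ (N:ℝ) ^ 2 * (A ^ 7 * (1 + u ^ 3) * s ^ (-(3/2) : ℝ)) := by
      rw [hM]
      calc (N:ℝ) ^ 2 * (A ^ 4 * s ^ (-(3/2) : ℝ)) * u ^ 2
          ≤ (N:ℝ) ^ 2 * (A ^ 7 * s ^ (-(3/2) : ℝ)) * (1 + u ^ 3) := by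
            apply mul_le_mul _ (sq_le_one_add_cube hu0) (sq_nonneg u) (by positivity)
            apply mul_le_mul_of_nonneg_left _ (by positivity)
            exact mul_le_mul_of_nonneg_right hA47 e32pos.le
        _ = (N:ℝ) ^ 2 * (A ^ 7 * (1 + u ^ 3) * s ^ (-(3/2) : ℝ)) := by ring
    have b3 : 2 * ((N:ℝ) * M) ≤ 2 * N * (A ^ 7 * (1 + u ^ 3) * s ^ (-(3/2) : ℝ)) := by
      rw [hM]
      have h1 : A ^ 4 * s ^ (-(3/2) : ℝ) ≤ A ^ 7 * (1 + u ^ 3) * s ^ (-(3/2) : ℝ) := by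
        apply mul_le_mul_of_nonneg_right _ e32pos.le
        calc A ^ 4 ≤ A ^ 7 := hA47
          _ ≤ A ^ 7 * (1 + u ^ 3) := le_mul_of_one_le_right (by positivity)
              (by linarith only [pow_nonneg hu0 3])
      calc 2 * ((N:ℝ) * (A ^ 4 * s ^ (-(3/2) : ℝ))) = 2 * N * (A ^ 4 * s ^ (-(3/2) : ℝ)) := by ring
        _ ≤ 2 * N * (A ^ 7 * (1 + u ^ 3) * s ^ (-(3/2) : ℝ)) :=
            mul_le_mul_of_nonneg_left h1 (by positivity)
    have b4 : A ^ 6 * (1 + u ^ 3) * s ^ (-2 : ℝ) ≤ A ^ 7 * (1 + u ^ 3) * s ^ (-(3/2) : ℝ) := by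
      apply mul_le_mul (mul_le_mul_of_nonneg_right hA67 (by positivity)) h22 e2pos.le
        (by positivity)
    have bqe : |qe y| ≤ A ^ 7 * (1 + u ^ 3) * s ^ (-(3/2) : ℝ) := by
      by_cases hy : u ≤ K₀ * t
      · rw [hqe0 y hy, abs_zero]; positivity
      · push_neg at hy
        have hu3 : s ≤ 1 + u ^ 3 := by
          have h1 : K₀ ^ 3 * t ^ 3 ≤ u ^ 3 := by
            have := pow_le_pow_left₀ (by positivity : (0:ℝ) ≤ K₀ * t) hy.le 3
            calc K₀ ^ 3 * t ^ 3 = (K₀ * t) ^ 3 := by ring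
              _ ≤ u ^ 3 := this
          rw [ht3] at h1
          have h2 : s ^ ((3:ℝ)/2) ≤ K₀ ^ 3 * s ^ ((3:ℝ)/2) :=
            le_mul_of_one_le_left (by positivity) hK3
          linarith only [h1, h2, hs32]
        calc |qe y| ≤ A ^ 7 * s ^ (-(1/2) : ℝ) := hqe y
          _ = A ^ 7 * (s * s ^ (-(3/2) : ℝ)) := by rw [pB]
          _ ≤ A ^ 7 * ((1 + u ^ 3) * s ^ (-(3/2) : ℝ)) := by
              apply mul_le_mul_of_nonneg_left _ (by positivity)
              exact mul_le_mul_of_nonneg_right hu3 e32pos.le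
          _ = A ^ 7 * (1 + u ^ 3) * s ^ (-(3/2) : ℝ) := by ring
    have hqy : |q y| ≤ ((N:ℝ) ^ 2 + 2 * N + 4) * (A ^ 7 * (1 + u ^ 3) * s ^ (-(3/2) : ℝ)) := by
      rw [hq y]
      calc |q₀ + ⟪q₁, y⟫ + (∑ i, ∑ j, Q₂ i j * y i * y j) - 2 * Matrix.trace Q₂ + qm y + qe y|
          ≤ |q₀ + ⟪q₁, y⟫ + (∑ i, ∑ j, Q₂ i j * y i * y j) - 2 * Matrix.trace Q₂ + qm y|
            + |qe y| := abs_add_le _ _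
        _ ≤ _ := by linarith only [hin, b0, b1, b2, b3, b4, bqe]
    calc |q y| ≤ ((N:ℝ) ^ 2 + 2 * N + 4) * (A ^ 7 * (1 + u ^ 3) * s ^ (-(3/2) : ℝ)) := hqy
      _ ≤ C * (A ^ 7 * (1 + u ^ 3) * s ^ (-(3/2) : ℝ)) := by
          apply mul_le_mul_of_nonneg_right _ (by positivity)
          linarith only [hCcoef2]
      _ = C * A ^ 7 * (1 + u ^ 3) * s ^ (-(3/2) : ℝ) := by ring
end

section
/- Let N ≥ 1 be an integer and let f : ℝ^N → ℝ be smooth (C^∞) with compact support. For t > 0 and x ∈ ℝ^N define u(t,x) = ∫_{ℝ^N} (4πt)^{−N/2}·exp(−|x−y|²/(4t))·f(y) dy. Then there exists a constant C > 0 (one may take C = sup_{x ∈ ℝ^N} |∇Δf(x)|) such that for all t ∈ (0,1] and all x ∈ ℝ^N: |∇_x u(t,x) − ∇f(x)| ≤ C·t. -/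
open MeasureTheory

open Real Filter in
private lemma gauss_int_aux {N : ℕ} {b : ℝ} (hb : 0 < b) :
    Integrable (fun v : EuclideanSpace ℝ (Fin N) => rexp (-‖v‖^2 / b)) := by
  have h := (GaussianFourier.integrable_cexp_neg_mul_sq_norm_add (V := EuclideanSpace ℝ (Fin N))
    (b := ((1/b : ℝ) : ℂ)) (by simpa using hb) 0 (0 : EuclideanSpace ℝ (Fin N))).norm
  refine h.congr (Eventually.of_forall fun v => ?_)
  dsimp only
  have : ‖Complex.exp (-(↑(1/b : ℝ)) * (‖v‖:ℂ) ^ 2 + 0 * ((inner ℝ 0 v : ℝ) : ℂ))‖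
      = rexp (-(1/b) * ‖v‖^2) := by
    simp [Complex.norm_exp, ← Complex.ofReal_pow]
  rw [this]
  congr 1
  field_simp

open Real in
private lemma gauss_val_aux {N : ℕ} {b : ℝ} (hb : 0 < b) :
    ∫ v : EuclideanSpace ℝ (Fin N), rexp (-‖v‖^2 / b) = (π * b) ^ ((N:ℝ)/2) := by
  have h : (fun v : EuclideanSpace ℝ (Fin N) => rexp (-‖v‖^2 / b))
      = fun v => rexp (-(1/b) * ‖v‖^2) := by
    funext v; congr 1; field_simp
  rw [h, GaussianFourier.integral_rexp_neg_mul_sq_norm (by positivity),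
    finrank_euclideanSpace_fin]
  congr 1
  field_simp

set_option maxHeartbeats 1000000 in
open Real Filter ContinuousLinearMap in
open scoped Convolution in
/-- For smooth compactly supported `f`, the gradient of the heat semigroup applied
to `f` stays within `C t` of the gradient of `f`, uniformly for `t ∈ (0,1]`. -/
theorem stmt16 (N : ℕ) (hN : 1 ≤ N) (f : EuclideanSpace ℝ (Fin N) → ℝ)
    (hf : ContDiff ℝ (⊤ : ℕ∞) f) (hsupp : HasCompactSupport f) :
    ∃ C > (0 : ℝ), ∀ t ∈ Set.Ioc (0 : ℝ) 1, ∀ x : EuclideanSpace ℝ (Fin N),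
      ‖gradient (fun x' : EuclideanSpace ℝ (Fin N) =>
          ∫ y : EuclideanSpace ℝ (Fin N),
            (4 * Real.pi * t) ^ (-(N : ℝ) / 2) * Real.exp (-‖x' - y‖ ^ 2 / (4 * t)) * f y) x
        - gradient f x‖ ≤ C * t := by
  have hπ := Real.pi_pos
  set F := fderiv ℝ f with hF
  have hFc : ContDiff ℝ (⊤ : ℕ∞) F := hf.fderiv_right (by simp)
  set F' := fderiv ℝ F with hF'
  have hF'c : ContDiff ℝ (⊤ : ℕ∞) F' := hFc.fderiv_right (by simp)
  letI : NormedAddCommGroup (EuclideanSpace ℝ (Fin N) →L[ℝ] EuclideanSpace ℝ (Fin N) →L[ℝ] EuclideanSpace ℝ (Fin N) →L[ℝ] ℝ) :=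
    @ContinuousLinearMap.toNormedAddCommGroup ℝ ℝ (EuclideanSpace ℝ (Fin N)) (EuclideanSpace ℝ (Fin N) →L[ℝ] EuclideanSpace ℝ (Fin N) →L[ℝ] ℝ) _ _ _ _ _ _ (RingHom.id ℝ) _
  letI : NormedSpace ℝ (EuclideanSpace ℝ (Fin N) →L[ℝ] EuclideanSpace ℝ (Fin N) →L[ℝ] EuclideanSpace ℝ (Fin N) →L[ℝ] ℝ) :=
    @ContinuousLinearMap.toNormedSpace ℝ ℝ (EuclideanSpace ℝ (Fin N)) (EuclideanSpace ℝ (Fin N) →L[ℝ] EuclideanSpace ℝ (Fin N) →L[ℝ] ℝ) _ _ _ _ _ _ (RingHom.id ℝ) _ ℝ _ _ _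
  have hF''c : ContDiff ℝ (⊤ : ℕ∞) (fderiv ℝ F') := hF'c.fderiv_right (by simp)
  have hF''cont : Continuous (fderiv ℝ F') := hF''c.continuous
  have hFsupp : HasCompactSupport F := HasCompactSupport.fderiv (𝕜 := ℝ) hsupp
  have hF'supp : HasCompactSupport F' := HasCompactSupport.fderiv (𝕜 := ℝ) hFsupp
  have hF''supp : HasCompactSupport (fderiv ℝ F') := HasCompactSupport.fderiv (𝕜 := ℝ) hF'supp
  obtain ⟨M₀, hM₀⟩ := hF''supp.exists_bound_of_continuous hF''cont
  obtain ⟨M₁, hM₁⟩ := hFsupp.exists_bound_of_continuous hFc.continuous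
  set M := max M₀ 0 with hMdef
  have hM0 : 0 ≤ M := le_max_right _ _
  have hM : ∀ z, ‖fderiv ℝ F' z‖ ≤ M := fun z => (hM₀ z).trans (le_max_left _ _)
  set K := (2:ℝ) ^ ((N:ℝ)/2) with hKdef
  have hK : 0 < K := Real.rpow_pos_of_pos (by norm_num) _
  refine ⟨max 1 (M * (8 * K)), lt_of_lt_of_le one_pos (le_max_left _ _), ?_⟩
  set C := max 1 (M * (8 * K)) with hCdef
  have hC0 : (0:ℝ) < C := lt_of_lt_of_le one_pos (le_max_left _ _)
  have hCle : M * (8 * K) ≤ C := le_max_right _ _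
  rintro t ⟨ht0, ht1⟩ x
  have h4t : (0:ℝ) < 4 * t := by linarith
  have h8t : (0:ℝ) < 8 * t := by linarith
  have h4πt : (0:ℝ) < 4 * π * t := by positivity
  set c : ℝ := (4 * π * t) ^ (-(N:ℝ) / 2) with hcdef
  have hc0 : 0 < c := Real.rpow_pos_of_pos h4πt _
  set g : EuclideanSpace ℝ (Fin N) → ℝ := fun z => c * rexp (-‖z‖^2 / (4*t)) with hgdef
  have hg_cont : Continuous g := by
    apply Continuous.mul continuous_const
    exact Real.continuous_exp.comp (((continuous_norm.pow 2).neg).div_const _)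
  have hg_nonneg : ∀ z, 0 ≤ g z := fun z => by
    simp only [hgdef]; positivity
  have hg_int : Integrable g := (gauss_int_aux h4t).const_mul c
  have hg_one : ∫ z : EuclideanSpace ℝ (Fin N), g z = 1 := by
    simp only [hgdef]
    rw [integral_const_mul, gauss_val_aux h4t,
      show π * (4*t) = 4*π*t by ring, hcdef, ← Real.rpow_add h4πt,
      show -(N:ℝ)/2 + (N:ℝ)/2 = 0 by ring, Real.rpow_zero]
  have he8_int : Integrable (fun z : EuclideanSpace ℝ (Fin N) => rexp (-‖z‖^2 / (8*t))) :=
    gauss_int_aux h8t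
  -- pointwise second moment bound
  have hpt : ∀ z : EuclideanSpace ℝ (Fin N),
      ‖z‖^2 * rexp (-‖z‖^2 / (4*t)) ≤ (8*t) * rexp (-‖z‖^2 / (8*t)) := by
    intro z
    have hsplit : rexp (-‖z‖^2 / (4*t)) = rexp (-‖z‖^2 / (8*t)) * rexp (-‖z‖^2 / (8*t)) := by
      rw [← Real.exp_add]; congr 1; field_simp; ring
    have key : ‖z‖^2 * rexp (-‖z‖^2 / (8*t)) ≤ 8*t := by
      set a := ‖z‖^2 / (8*t) with ha
      have ha0 : 0 ≤ a := by positivity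
      have h1 : a ≤ rexp a := by linarith [Real.add_one_le_exp a]
      have hz : ‖z‖^2 = 8*t*a := by rw [ha]; field_simp
      have hna : -‖z‖^2 / (8*t) = -a := by rw [ha]; ring
      rw [hna, hz, Real.exp_neg]
      have h3 : a * (rexp a)⁻¹ ≤ 1 := by
        rw [← mul_inv_cancel₀ (ne_of_gt (Real.exp_pos a))]
        exact mul_le_mul_of_nonneg_right h1 (inv_nonneg.mpr (Real.exp_pos a).le)
      calc 8*t*a*(rexp a)⁻¹ = (8*t) * (a * (rexp a)⁻¹) := by ring
        _ ≤ (8*t) * 1 := by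
            exact mul_le_mul_of_nonneg_left h3 h8t.le
        _ = 8*t := by ring
    calc ‖z‖^2 * rexp (-‖z‖^2 / (4*t))
        = (‖z‖^2 * rexp (-‖z‖^2 / (8*t))) * rexp (-‖z‖^2 / (8*t)) := by rw [hsplit]; ring
      _ ≤ (8*t) * rexp (-‖z‖^2 / (8*t)) :=
          mul_le_mul_of_nonneg_right key (Real.exp_nonneg _)
  have hptg : ∀ z : EuclideanSpace ℝ (Fin N),
      g z * ‖z‖^2 ≤ (c*(8*t)) * rexp (-‖z‖^2 / (8*t)) := by
    intro z
    have := mul_le_mul_of_nonneg_left (hpt z) hc0.le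
    calc g z * ‖z‖^2 = c * (‖z‖^2 * rexp (-‖z‖^2 / (4*t))) := by rw [hgdef]; ring
      _ ≤ c * ((8*t) * rexp (-‖z‖^2 / (8*t))) := this
      _ = (c*(8*t)) * rexp (-‖z‖^2 / (8*t)) := by ring
  have hg2_int : Integrable (fun z : EuclideanSpace ℝ (Fin N) => g z * ‖z‖^2) := by
    refine (he8_int.const_mul (c*(8*t))).mono'
      ((hg_cont.mul (continuous_norm.pow 2)).aestronglyMeasurable)
      (Eventually.of_forall fun z => ?_)
    rw [Real.norm_eq_abs, abs_of_nonneg (mul_nonneg (hg_nonneg z) (sq_nonneg _))]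
    exact hptg z
  have hg2_val : ∫ z : EuclideanSpace ℝ (Fin N), g z * ‖z‖^2 ≤ 8*K*t := by
    have hmono : ∫ z : EuclideanSpace ℝ (Fin N), g z * ‖z‖^2
        ≤ ∫ z : EuclideanSpace ℝ (Fin N), (c*(8*t)) * rexp (-‖z‖^2 / (8*t)) :=
      integral_mono hg2_int (he8_int.const_mul _) (fun z => hptg z)
    rw [integral_const_mul, gauss_val_aux h8t] at hmono
    have hrw : c * ((π*(8*t)) ^ ((N:ℝ)/2)) = K := by
      rw [hcdef, hKdef, show π * (8*t) = 2 * (4*π*t) by ring,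
        Real.mul_rpow (by norm_num) h4πt.le]
      calc (4*π*t) ^ (-(N:ℝ)/2) * ((2:ℝ)^((N:ℝ)/2) * (4*π*t)^((N:ℝ)/2))
          = (2:ℝ)^((N:ℝ)/2) * ((4*π*t)^(-(N:ℝ)/2) * (4*π*t)^((N:ℝ)/2)) := by ring
        _ = (2:ℝ)^((N:ℝ)/2) * (4*π*t)^(-(N:ℝ)/2 + (N:ℝ)/2) := by rw [Real.rpow_add h4πt]
        _ = (2:ℝ)^((N:ℝ)/2) := by
            rw [show -(N:ℝ)/2 + (N:ℝ)/2 = 0 by ring, Real.rpow_zero, mul_one]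
    calc ∫ z : EuclideanSpace ℝ (Fin N), g z * ‖z‖^2
        ≤ c * (8*t) * (π*(8*t)) ^ ((N:ℝ)/2) := hmono
      _ = (8*t) * (c * (π*(8*t)) ^ ((N:ℝ)/2)) := by ring
      _ = 8*K*t := by rw [hrw]; ring
  have hg1_int : Integrable (fun z : EuclideanSpace ℝ (Fin N) => g z * ‖z‖) := by
    refine (hg_int.add hg2_int).mono'
      ((hg_cont.mul continuous_norm).aestronglyMeasurable)
      (Eventually.of_forall fun z => ?_)
    rw [Real.norm_eq_abs, abs_of_nonneg (mul_nonneg (hg_nonneg z) (norm_nonneg _))]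
    have h1 : ‖z‖ ≤ 1 + ‖z‖^2 := by nlinarith [sq_nonneg (‖z‖ - 1)]
    have := mul_le_mul_of_nonneg_left h1 (hg_nonneg z)
    calc g z * ‖z‖ ≤ g z * (1 + ‖z‖^2) := this
      _ = g z + g z * ‖z‖^2 := by ring
  -- convolution
  set L := ContinuousLinearMap.mul ℝ ℝ with hL
  have hg_loc : LocallyIntegrable g := hg_int.locallyIntegrable
  have hconv_eq : (fun x' : EuclideanSpace ℝ (Fin N) =>
      ∫ y : EuclideanSpace ℝ (Fin N), c * rexp (-‖x' - y‖^2 / (4*t)) * f y)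
      = g ⋆[L, volume] f := by
    funext x'
    rw [convolution_def,
      ← integral_sub_left_eq_self (fun y => L (g y) (f (x' - y))) volume x']
    congr 1; funext y
    simp only [hL, ContinuousLinearMap.mul_apply', hgdef, sub_sub_cancel]
  have hfd1 : ContDiff ℝ 1 f := hf.of_le (by simp)
  have hder : HasFDerivAt (g ⋆[L, volume] f)
      ((g ⋆[L.precompR (EuclideanSpace ℝ (Fin N)), volume] (fderiv ℝ f)) x) x :=
    hsupp.hasFDerivAt_convolution_right L hg_loc hfd1 x
  have hfderiv_u : fderiv ℝ (g ⋆[L, volume] f) x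
      = (g ⋆[L.precompR (EuclideanSpace ℝ (Fin N)), volume] F) x := by
    rw [hF]; exact hder.fderiv
  -- gradient to fderiv
  have hgrad : ∀ (h : EuclideanSpace ℝ (Fin N) → ℝ) (y : EuclideanSpace ℝ (Fin N)),
      gradient h y = (InnerProductSpace.toDual ℝ (EuclideanSpace ℝ (Fin N))).symm
        (fderiv ℝ h y) := fun _ _ => rfl
  rw [hgrad, hgrad, ← map_sub, LinearIsometryEquiv.norm_map, hconv_eq, hfderiv_u]
  -- operator norm bound
  refine ContinuousLinearMap.opNorm_le_bound _ (mul_nonneg hC0.le ht0.le) fun v => ?_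
  rw [ContinuousLinearMap.sub_apply,
    convolution_precompR_apply L hg_loc hFsupp hFc.continuous x v, convolution_def]
  simp only [hL, ContinuousLinearMap.mul_apply']
  -- integrability of the three pieces
  have hcontFv : Continuous fun z : EuclideanSpace ℝ (Fin N) => (F (x - z)) v :=
    (ContinuousLinearMap.apply ℝ ℝ v).continuous.comp
      (hFc.continuous.comp (continuous_const.sub continuous_id))
  have hintA : Integrable (fun z : EuclideanSpace ℝ (Fin N) => g z * (F (x - z)) v) := by
    refine (hg_int.const_mul (M₁ * ‖v‖)).mono'
      ((hg_cont.mul hcontFv).aestronglyMeasurable) (Eventually.of_forall fun z => ?_)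
    rw [Real.norm_eq_abs, abs_mul, abs_of_nonneg (hg_nonneg z)]
    have h1 : |(F (x - z)) v| ≤ M₁ * ‖v‖ := by
      calc |(F (x - z)) v| ≤ ‖F (x - z)‖ * ‖v‖ := (F (x - z)).le_opNorm v
        _ ≤ M₁ * ‖v‖ := mul_le_mul_of_nonneg_right (hM₁ _) (norm_nonneg v)
    calc g z * |(F (x - z)) v| ≤ g z * (M₁ * ‖v‖) :=
          mul_le_mul_of_nonneg_left h1 (hg_nonneg z)
      _ = (M₁ * ‖v‖) * g z := by ring
  have hintB : Integrable (fun z : EuclideanSpace ℝ (Fin N) => g z * (F x) v) :=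
    hg_int.mul_const _
  have hintC : Integrable (fun z : EuclideanSpace ℝ (Fin N) => g z * ((F' x) z) v) := by
    refine (hg1_int.const_mul (‖F' x‖ * ‖v‖)).mono'
      ((hg_cont.mul ((ContinuousLinearMap.apply ℝ ℝ v).continuous.comp
        (F' x).continuous)).aestronglyMeasurable) (Eventually.of_forall fun z => ?_)
    rw [Real.norm_eq_abs, abs_mul, abs_of_nonneg (hg_nonneg z)]
    have h1 : |((F' x) z) v| ≤ (‖F' x‖ * ‖v‖) * ‖z‖ := by
      calc |((F' x) z) v| ≤ ‖(F' x) z‖ * ‖v‖ := ((F' x) z).le_opNorm v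
        _ ≤ (‖F' x‖ * ‖z‖) * ‖v‖ :=
            mul_le_mul_of_nonneg_right ((F' x).le_opNorm z) (norm_nonneg v)
        _ = (‖F' x‖ * ‖v‖) * ‖z‖ := by ring
    calc g z * |((F' x) z) v| ≤ g z * ((‖F' x‖ * ‖v‖) * ‖z‖) :=
          mul_le_mul_of_nonneg_left h1 (hg_nonneg z)
      _ = (‖F' x‖ * ‖v‖) * (g z * ‖z‖) := by ring
  have hBval : (∫ z : EuclideanSpace ℝ (Fin N), g z * (F x) v) = (F x) v := by
    rw [integral_mul_const, hg_one, one_mul]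
  have hCval : (∫ z : EuclideanSpace ℝ (Fin N), g z * ((F' x) z) v) = 0 := by
    have h1 : ∫ z : EuclideanSpace ℝ (Fin N), -(g z * ((F' x) z) v)
        = ∫ z : EuclideanSpace ℝ (Fin N), g z * ((F' x) z) v := by
      rw [← integral_neg_eq_self (fun z : EuclideanSpace ℝ (Fin N) => g z * ((F' x) z) v) volume]
      congr 1; funext z
      simp [hgdef, norm_neg]
    rw [integral_neg] at h1; linarith
  -- Taylor estimate
  have htaylor : ∀ z : EuclideanSpace ℝ (Fin N),
      ‖F (x - z) - F x + (F' x) z‖ ≤ M * ‖z‖^2 := by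
    intro z
    have hdiff : ∀ y ∈ Metric.closedBall x ‖z‖, DifferentiableAt ℝ F y :=
      fun y _ => (hFc.differentiable (by simp)).differentiableAt
    have hbound : ∀ y ∈ Metric.closedBall x ‖z‖, ‖fderiv ℝ F y - F' x‖ ≤ M * ‖z‖ := by
      intro y hy
      have hmvt : ‖F' y - F' x‖ ≤ M * ‖y - x‖ :=
        convex_univ.norm_image_sub_le_of_norm_fderiv_le (f := F')
          (fun w _ => (hF'c.differentiable (by simp)).differentiableAt)
          (fun w _ => hM w) trivial trivial
      have hle : ‖y - x‖ ≤ ‖z‖ := by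
        rw [← dist_eq_norm]; exact Metric.mem_closedBall.mp hy
      calc ‖fderiv ℝ F y - F' x‖ = ‖F' y - F' x‖ := by rw [hF']
        _ ≤ M * ‖y - x‖ := hmvt
        _ ≤ M * ‖z‖ := mul_le_mul_of_nonneg_left hle hM0
    have hx : x ∈ Metric.closedBall x ‖z‖ := Metric.mem_closedBall_self (norm_nonneg z)
    have hy : x - z ∈ Metric.closedBall x ‖z‖ := by
      simp [Metric.mem_closedBall, dist_eq_norm]
    have h := Convex.norm_image_sub_le_of_norm_fderiv_le' hdiff hbound
      (convex_closedBall x ‖z‖) hx hy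
    rw [sub_sub_cancel_left, map_neg, sub_neg_eq_add, norm_neg] at h
    calc ‖F (x - z) - F x + (F' x) z‖ ≤ (M * ‖z‖) * ‖z‖ := h
      _ = M * ‖z‖^2 := by ring
  -- put it together
  have key : (∫ z : EuclideanSpace ℝ (Fin N), g z * (F (x - z)) v) - (F x) v
      = ∫ z : EuclideanSpace ℝ (Fin N),
          (g z * (F (x - z)) v - g z * (F x) v + g z * ((F' x) z) v) := by
    have e1 : (∫ z : EuclideanSpace ℝ (Fin N),
          (g z * (F (x - z)) v - g z * (F x) v + g z * ((F' x) z) v))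
        = (∫ z : EuclideanSpace ℝ (Fin N), (g z * (F (x - z)) v - g z * (F x) v))
          + ∫ z : EuclideanSpace ℝ (Fin N), g z * ((F' x) z) v :=
      integral_add (hintA.sub hintB) hintC
    have e2 : (∫ z : EuclideanSpace ℝ (Fin N), (g z * (F (x - z)) v - g z * (F x) v))
        = (∫ z : EuclideanSpace ℝ (Fin N), g z * (F (x - z)) v)
          - ∫ z : EuclideanSpace ℝ (Fin N), g z * (F x) v :=
      integral_sub hintA hintB
    rw [e1, e2, hBval, hCval, add_zero]
  rw [key]
  have hptw : ∀ z : EuclideanSpace ℝ (Fin N),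
      ‖g z * (F (x - z)) v - g z * (F x) v + g z * ((F' x) z) v‖
        ≤ (M * ‖v‖) * (g z * ‖z‖^2) := by
    intro z
    have h0 : g z * (F (x - z)) v - g z * (F x) v + g z * ((F' x) z) v
        = g z * ((F (x - z) - F x + (F' x) z) v) := by
      simp only [ContinuousLinearMap.add_apply, ContinuousLinearMap.sub_apply]; ring
    rw [h0, Real.norm_eq_abs, abs_mul, abs_of_nonneg (hg_nonneg z)]
    have h1 : |(F (x - z) - F x + (F' x) z) v| ≤ (M * ‖z‖^2) * ‖v‖ := by
      calc |(F (x - z) - F x + (F' x) z) v|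
          ≤ ‖F (x - z) - F x + (F' x) z‖ * ‖v‖ :=
            (F (x - z) - F x + (F' x) z).le_opNorm v
        _ ≤ (M * ‖z‖^2) * ‖v‖ := mul_le_mul_of_nonneg_right (htaylor z) (norm_nonneg v)
    calc g z * |(F (x - z) - F x + (F' x) z) v|
        ≤ g z * ((M * ‖z‖^2) * ‖v‖) := mul_le_mul_of_nonneg_left h1 (hg_nonneg z)
      _ = (M * ‖v‖) * (g z * ‖z‖^2) := by ring
  calc ‖∫ z : EuclideanSpace ℝ (Fin N),
        (g z * (F (x - z)) v - g z * (F x) v + g z * ((F' x) z) v)‖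
      ≤ ∫ z : EuclideanSpace ℝ (Fin N), (M * ‖v‖) * (g z * ‖z‖^2) :=
        norm_integral_le_of_norm_le (hg2_int.const_mul _) (Eventually.of_forall hptw)
    _ = (M * ‖v‖) * ∫ z : EuclideanSpace ℝ (Fin N), g z * ‖z‖^2 := integral_const_mul _ _
    _ ≤ (M * ‖v‖) * (8*K*t) :=
        mul_le_mul_of_nonneg_left hg2_val (mul_nonneg hM0 (norm_nonneg v))
    _ = (M * (8*K)) * t * ‖v‖ := by ring
    _ ≤ C * t * ‖v‖ :=
        mul_le_mul_of_nonneg_right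
          (mul_le_mul_of_nonneg_right hCle ht0.le) (norm_nonneg v)
end

section
/- Let N ≥ 1 be an integer and let p > 1, b > 0 and a ≥ 0 be real numbers. Define φ(y,s) = (p−1 + b|y|²/s)^{−1/(p−1)} + a/s for y ∈ ℝ^N, s > 0, and define the potential V(y,s) = p·(φ(y,s)^{p−1} − 1/(p−1)). Then: (i) ∫_{ℝ^N} V(y,s)²·ρ(y) dy → 0 as s → +∞, where ρ(y) = (4π)^{−N/2}·exp(−|y|²/4); and (ii) for every ε > 0 there exist C_ε > 0 and s_ε > 0 such that |V(y,s) − (−p/(p−1))| ≤ ε for all s ≥ s_ε and all y ∈ ℝ^N with |y| ≥ C_ε·√s. -/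
/-!
For fixed `y`, `φ(y, s) → (p-1)^(-1/(p-1))` as `s → ∞`, whose `(p-1)`-th power is `1/(p-1)`, so
`V(y, s) → 0` pointwise. For `s ≥ 1` we have `0 < φ ≤ (p-1)^(-1/(p-1)) + a`, so `V` is uniformly
bounded and dominated convergence against the integrable Gaussian weight gives (i).
For (ii), `V + p/(p-1) = p φ^(p-1)`, and on `|y| ≥ C √s` the profile is at most
`(p-1+bC²)^(-1/(p-1)) + a/s`, which tends to `0` as `C, s → ∞`.
-/

open MeasureTheory Filter Topology

theorem integrable_exp_neg_mul_sq_norm {V : Type*} [NormedAddCommGroup V] [InnerProductSpace ℝ V]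
    [FiniteDimensional ℝ V] [MeasurableSpace V] [BorelSpace V] {c : ℝ} (hc : 0 < c) :
    Integrable (fun v : V => Real.exp (-c * ‖v‖ ^ 2)) := by
  refine (GaussianFourier.integrable_cexp_neg_mul_sq_norm_add (V := V) (b := c)
    (by simpa using hc) 0 0).norm.congr (.of_forall fun v => ?_)
  simp [Complex.norm_exp, ← Complex.ofReal_pow]

namespace BlowUp

/-- `φ(y, s)` and `V(y, s)` written as functions of `r = |y|²`. -/
noncomputable def profile (p b a r s : ℝ) : ℝ :=
  (p - 1 + b * r / s) ^ (-(1 / (p - 1))) + a / s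

noncomputable def potential (p b a r s : ℝ) : ℝ :=
  p * (profile p b a r s ^ (p - 1) - 1 / (p - 1))

variable {p b a r s : ℝ}

theorem measurable_potential : Measurable fun r => potential p b a r s := by
  unfold potential profile; fun_prop

theorem profile_pos (hp : 1 < p) (hb : 0 ≤ b) (ha : 0 ≤ a) (hr : 0 ≤ r) (hs : 0 < s) :
    0 < profile p b a r s := by
  have : 0 < p - 1 + b * r / s := by have := sub_pos.2 hp; positivity
  unfold profile; positivity

theorem profile_le_of_sq_mul_le {C : ℝ} (hp : 1 < p) (hb : 0 ≤ b) (hs : 0 < s)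
    (hr : C ^ 2 * s ≤ r) :
    profile p b a r s ≤ (p - 1 + b * C ^ 2) ^ (-(1 / (p - 1))) + a / s := by
  have hC : b * C ^ 2 ≤ b * r / s := by
    rw [le_div_iff₀ hs, mul_assoc]; exact mul_le_mul_of_nonneg_left hr hb
  have hp1 := sub_pos.2 hp
  unfold profile
  gcongr ?_ + _
  exact Real.rpow_le_rpow_of_nonpos (by positivity) (by linarith)
    (neg_nonpos.2 (by positivity))

theorem profile_le_of_one_le (hp : 1 < p) (hb : 0 ≤ b) (ha : 0 ≤ a) (hr : 0 ≤ r) (hs : 1 ≤ s) :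
    profile p b a r s ≤ (p - 1) ^ (-(1 / (p - 1))) + a := by
  calc profile p b a r s ≤ (p - 1 + b * 0 ^ 2) ^ (-(1 / (p - 1))) + a / s :=
        profile_le_of_sq_mul_le hp hb (by positivity) (by simpa using hr)
    _ ≤ (p - 1) ^ (-(1 / (p - 1))) + a := by simpa using div_le_self ha hs

theorem abs_potential_le (hp : 1 < p) (hb : 0 ≤ b) (ha : 0 ≤ a) (hr : 0 ≤ r) (hs : 1 ≤ s) :
    |potential p b a r s| ≤ p * (((p - 1) ^ (-(1 / (p - 1))) + a) ^ (p - 1) + 1 / (p - 1)) := by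
  have hφ := profile_pos hp hb ha hr (by linarith)
  have hp1 := sub_pos.2 hp
  have h0 : 0 ≤ profile p b a r s ^ (p - 1) := by positivity
  have h1 := Real.rpow_le_rpow hφ.le (profile_le_of_one_le hp hb ha hr hs) hp1.le
  have : 0 < 1 / (p - 1) := by positivity
  unfold potential
  rw [abs_mul, abs_of_pos (by linarith : 0 < p)]
  gcongr
  exact abs_sub_le_of_nonneg_of_le h0 (by linarith) this.le (by linarith)

theorem tendsto_profile_atTop (hp : 1 < p) :
    Tendsto (profile p b a r) atTop (𝓝 ((p - 1) ^ (-(1 / (p - 1))))) := by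
  have hp1 := sub_pos.2 hp
  have h : Tendsto (fun s => p - 1 + b * r / s) atTop (𝓝 (p - 1)) := by
    simpa using tendsto_const_nhds.add ((tendsto_const_nhds (x := b * r)).div_atTop tendsto_id)
  show Tendsto (fun s => (p - 1 + b * r / s) ^ (-(1 / (p - 1))) + a / s) atTop _
  simpa using (h.rpow_const (p := -(1 / (p - 1))) (.inl hp1.ne')).add
    ((tendsto_const_nhds (x := a)).div_atTop tendsto_id)

theorem tendsto_potential_atTop (hp : 1 < p) : Tendsto (potential p b a r) atTop (𝓝 0) := by
  have hp1 := sub_pos.2 hp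
  have hlim : ((p - 1) ^ (-(1 / (p - 1)))) ^ (p - 1) = 1 / (p - 1) := by
    rw [← Real.rpow_mul hp1.le, neg_mul, one_div_mul_cancel hp1.ne', Real.rpow_neg_one, one_div]
  have h : Tendsto (fun s => profile p b a r s ^ (p - 1)) atTop (𝓝 (1 / (p - 1))) :=
    hlim ▸ (tendsto_profile_atTop hp).rpow_const (.inl (by positivity))
  show Tendsto (fun s => p * (profile p b a r s ^ (p - 1) - 1 / (p - 1))) atTop (𝓝 0)
  simpa using (h.sub_const (1 / (p - 1))).const_mul p

theorem potential_add_eq :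
    potential p b a r s + p / (p - 1) = p * profile p b a r s ^ (p - 1) := by
  unfold potential; ring

/-- The bound on `|V + p/(p-1)|` over the region `r ≥ C² s` given by `profile_le_of_sq_mul_le`,
as a function of `(C, s)`. -/
theorem tendsto_tail_bound (hp : 1 < p) (hb : 0 < b) :
    Tendsto (fun x : ℝ × ℝ => p * ((p - 1 + b * x.1 ^ 2) ^ (-(1 / (p - 1))) + a / x.2) ^ (p - 1))
      (atTop ×ˢ atTop) (𝓝 0) := by
  have hp1 := sub_pos.2 hp
  have hbase : Tendsto (fun x : ℝ × ℝ => p - 1 + b * x.1 ^ 2) (atTop ×ˢ atTop) atTop :=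
    tendsto_atTop_add_const_left _ _
      (((tendsto_pow_atTop two_ne_zero).const_mul_atTop hb).comp tendsto_fst)
  have hsum : Tendsto (fun x : ℝ × ℝ => (p - 1 + b * x.1 ^ 2) ^ (-(1 / (p - 1))) + a / x.2)
      (atTop ×ˢ atTop) (𝓝 0) := by
    simpa using ((tendsto_rpow_neg_atTop (by positivity)).comp hbase).add
      (((tendsto_const_nhds (x := a)).div_atTop tendsto_id).comp tendsto_snd)
  simpa [Real.zero_rpow hp1.ne'] using (hsum.rpow_const (.inr hp1.le)).const_mul p

theorem exists_abs_potential_add_le (hp : 1 < p) (hb : 0 < b) (ha : 0 ≤ a) {ε : ℝ} (hε : 0 < ε) :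
    ∃ C > 0, ∃ s₀ > 0, ∀ s ≥ s₀, ∀ r, C ^ 2 * s ≤ r → |potential p b a r s + p / (p - 1)| ≤ ε := by
  obtain ⟨A, hA⟩ := eventually_atTop_prod_self'.1 <| prod_atTop_atTop_eq (α := ℝ) (β := ℝ) ▸
    (tendsto_tail_bound (a := a) hp hb).eventually (ge_mem_nhds hε)
  refine ⟨max A 1, by positivity, max A 1, by positivity, fun s hs r hr => ?_⟩
  have hs0 : 0 < s := lt_of_lt_of_le (by positivity) hs
  have hr0 : 0 ≤ r := le_trans (by positivity) hr
  have hφ := profile_pos (a := a) hp hb.le ha hr0 hs0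
  have hp1 := sub_pos.2 hp
  rw [potential_add_eq, abs_of_nonneg (by positivity)]
  calc p * profile p b a r s ^ (p - 1)
      ≤ p * ((p - 1 + b * max A 1 ^ 2) ^ (-(1 / (p - 1))) + a / s) ^ (p - 1) := by
        gcongr; exact profile_le_of_sq_mul_le hp hb.le hs0 hr
    _ ≤ ε := hA _ (le_max_left _ _) s (le_trans (le_max_left _ _) hs)

theorem tendsto_integral_potential_sq_mul {E : Type*} [MeasurableSpace E] {μ : Measure E}
    {g ρ : E → ℝ} (hp : 1 < p) (hb : 0 ≤ b) (ha : 0 ≤ a) (hg : Measurable g) (hg0 : ∀ y, 0 ≤ g y)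
    (hρ : Integrable ρ μ) :
    Tendsto (fun s => ∫ y, potential p b a (g y) s ^ 2 * ρ y ∂μ) atTop (𝓝 0) := by
  set M := p * (((p - 1) ^ (-(1 / (p - 1))) + a) ^ (p - 1) + 1 / (p - 1))
  have h := tendsto_integral_filter_of_dominated_convergence (l := atTop)
    (F := fun s y => potential p b a (g y) s ^ 2 * ρ y) (f := 0) (fun y => M ^ 2 * ‖ρ y‖) ?_ ?_
    (hρ.norm.const_mul _) ?_
  · simpa using h
  · exact .of_forall fun s => ((measurable_potential.comp hg).pow_const 2).aestronglyMeasurable.mul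
      hρ.aestronglyMeasurable
  · filter_upwards [eventually_ge_atTop 1] with s hs
    refine .of_forall fun y => ?_
    rw [norm_mul, norm_pow, Real.norm_eq_abs]
    gcongr
    exact abs_potential_le hp hb ha (hg0 y) hs
  · exact .of_forall fun y => by simpa using ((tendsto_potential_atTop hp).pow 2).mul_const (ρ y)

end BlowUp

theorem stmt17_general (N : ℕ) (p b a : ℝ) (hp : 1 < p) (hb : 0 < b) (ha : 0 ≤ a) :
    let φ : EuclideanSpace ℝ (Fin N) → ℝ → ℝ := fun y s =>
      (p - 1 + b * ‖y‖ ^ 2 / s) ^ (-(1 / (p - 1)) : ℝ) + a / s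
    let V : EuclideanSpace ℝ (Fin N) → ℝ → ℝ := fun y s =>
      p * (φ y s ^ (p - 1) - 1 / (p - 1))
    (Tendsto (fun s : ℝ =>
        ∫ y : EuclideanSpace ℝ (Fin N),
          (V y s) ^ 2 * ((4 * Real.pi) ^ (-(N : ℝ) / 2) * Real.exp (-‖y‖ ^ 2 / 4)))
      atTop (nhds 0)) ∧
    (∀ ε > (0 : ℝ), ∃ Cε > (0 : ℝ), ∃ sε > (0 : ℝ),
      ∀ s ≥ sε, ∀ y : EuclideanSpace ℝ (Fin N), Cε * Real.sqrt s ≤ ‖y‖ →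
        |V y s - (-(p / (p - 1)))| ≤ ε) := by
  intro φ V
  have hV : ∀ y s, V y s = BlowUp.potential p b a (‖y‖ ^ 2) s := fun _ _ => rfl
  simp only [hV, sub_neg_eq_add]
  refine ⟨BlowUp.tendsto_integral_potential_sq_mul hp hb.le ha (by fun_prop)
    (fun _ => by positivity) ?_, fun ε hε => ?_⟩
  · refine ((integrable_exp_neg_mul_sq_norm (c := 1 / 4) (by norm_num)).const_mul
      ((4 * Real.pi) ^ (-(N : ℝ) / 2))).congr (.of_forall fun y => ?_)
    ring_nf
  · obtain ⟨C, hC, s₀, hs₀, h⟩ := BlowUp.exists_abs_potential_add_le hp hb ha hε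
    refine ⟨C, hC, s₀, hs₀, fun s hs y hy => h s hs _ ?_⟩
    calc C ^ 2 * s = (C * Real.sqrt s) ^ 2 := by
          rw [mul_pow, Real.sq_sqrt (by linarith)]
      _ ≤ ‖y‖ ^ 2 := by gcongr

/-- The two key properties of the potential
`V(y,s) = p (φ(y,s)^(p-1) - 1/(p-1))` with `φ(y,s) = (p-1+b|y|²/s)^(-1/(p-1)) + a/s`:
(i) `V(·,s) → 0` in `L²_ρ(ℝ^N)` as `s → ∞` (here: `∫ V² ρ → 0`), and
(ii) `V` is uniformly close to `-p/(p-1)` in the region `|y| ≥ C_ε √s`. -/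
theorem stmt17 (N : ℕ) (hN : 1 ≤ N) (p b a : ℝ) (hp : 1 < p) (hb : 0 < b) (ha : 0 ≤ a) :
    let φ : EuclideanSpace ℝ (Fin N) → ℝ → ℝ := fun y s =>
      (p - 1 + b * ‖y‖ ^ 2 / s) ^ (-(1 / (p - 1)) : ℝ) + a / s
    let V : EuclideanSpace ℝ (Fin N) → ℝ → ℝ := fun y s =>
      p * (φ y s ^ (p - 1) - 1 / (p - 1))
    (Tendsto (fun s : ℝ =>
        ∫ y : EuclideanSpace ℝ (Fin N),
          (V y s) ^ 2 * ((4 * Real.pi) ^ (-(N : ℝ) / 2) * Real.exp (-‖y‖ ^ 2 / 4)))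
      atTop (nhds 0)) ∧
    (∀ ε > (0 : ℝ), ∃ Cε > (0 : ℝ), ∃ sε > (0 : ℝ),
      ∀ s ≥ sε, ∀ y : EuclideanSpace ℝ (Fin N), Cε * Real.sqrt s ≤ ‖y‖ →
        |V y s - (-(p / (p - 1)))| ≤ ε) :=
  stmt17_general N p b a hp hb ha
end
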